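/- arXiv:2307.04628 — 3 statements merged into one kernel-verified Lean document; each statement's English description precedes it below -/
import Mathlib

section
/- Let k, q ∈ ℕ, let H be a k-labeled graph, and let i, b, a_1, …, a_q ∈ Fin k with b ∈ {a_1, …, a_q, i}. Assume no operator occurrence on the left-hand side is useless. Then θ_i(ρ_{a_1→i}(⋯ ρ_{a_q→i}(θ_b(H)) ⋯)) = θ_i(ρ_{a_1→i}(⋯ ρ_{a_q→i}(H) ⋯)) as k-labeled graphs, up to label-preserving isomorphism. -/
/-! ### `k`-labeled graphs and the basic operations on them -/

/-- A `k`-labeled graph: a simple graph together with a labeling of its vertices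
by labels from `Fin k`. -/
structure LGraph (k : ℕ) where
  V : Type
  G : SimpleGraph V
  lab : V → Fin k

namespace LGraph

variable {k : ℕ}

/-- The join operation `η_{a,b}`: add all edges between vertices of label `a`
and vertices of label `b`. -/
def join (a b : Fin k) (H : LGraph k) : LGraph k where
  V := H.V
  G :=
    { Adj := fun u v =>
        H.G.Adj u v ∨ (u ≠ v ∧ ((H.lab u = a ∧ H.lab v = b) ∨ (H.lab u = b ∧ H.lab v = a)))
      symm := by
        constructor
        intro u v h
        rcases h with h | ⟨hne, h⟩
        · exact Or.inl (H.G.adj_symm h)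
        · refine Or.inr ⟨hne.symm, ?_⟩
          rcases h with ⟨h1, h2⟩ | ⟨h1, h2⟩
          · exact Or.inr ⟨h2, h1⟩
          · exact Or.inl ⟨h2, h1⟩
      loopless := by
        constructor
        intro v h
        rcases h with h | ⟨hne, _⟩
        · exact H.G.loopless.irrefl v h
        · exact hne rfl }
  lab := H.lab

/-- The relabel operation `ρ_{a→b}`: every vertex of label `a` gets label `b` instead. -/
def relabel (a b : Fin k) (H : LGraph k) : LGraph k where
  V := H.V
  G := H.G
  lab := fun v => if H.lab v = a then b else H.lab v

/-- The fuse operation `θ_i`: replace all vertices of label `i` by a single new vertex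
(represented by `none`) of label `i` whose neighbourhood is the union of their
neighbourhoods. -/
def fuse (i : Fin k) (H : LGraph k) : LGraph k where
  V := Option {v : H.V // H.lab v ≠ i}
  G :=
    { Adj := fun x y =>
        match x, y with
        | some u, some v => H.G.Adj u.1 v.1
        | some u, none => ∃ w, H.lab w = i ∧ H.G.Adj u.1 w
        | none, some v => ∃ w, H.lab w = i ∧ H.G.Adj w v.1
        | none, none => False
      symm := by
        constructor
        rintro (_ | u) (_ | v) h
        · exact h
        · obtain ⟨w, hw, ha⟩ := h
          exact ⟨w, hw, ha.symm⟩
        · obtain ⟨w, hw, ha⟩ := h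
          exact ⟨w, hw, ha.symm⟩
        · exact H.G.adj_symm h
      loopless := by
        constructor
        rintro (_ | v) h
        · exact h
        · exact H.G.loopless.irrefl v.1 h }
  lab := fun x =>
    match x with
    | some u => H.lab u.1
    | none => i

/-- Disjoint union `H1 ⊕ H2` of two `k`-labeled graphs. -/
def union (H1 H2 : LGraph k) : LGraph k where
  V := H1.V ⊕ H2.V
  G := H1.G ⊕g H2.G
  lab := Sum.elim H1.lab H2.lab

/-- Label-preserving isomorphism of `k`-labeled graphs. -/
def LIso (H1 H2 : LGraph k) : Prop :=
  ∃ e : H1.G ≃g H2.G, ∀ v, H2.lab (e v) = H1.lab v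

/-- The occurrence of the join operator `η_{a,b}` applied to `H` is not useless,
i.e. it creates at least one new edge. -/
def joinUseful (a b : Fin k) (H : LGraph k) : Prop :=
  ∃ u v : H.V, u ≠ v ∧ H.lab u = a ∧ H.lab v = b ∧ ¬ H.G.Adj u v

/-- The occurrence of the fuse operator `θ_i` applied to `H` is not useless,
i.e. `H` has at least two vertices of label `i`. -/
def fuseUseful (i : Fin k) (H : LGraph k) : Prop :=
  ∃ u v : H.V, u ≠ v ∧ H.lab u = i ∧ H.lab v = i

/-- The occurrence of a relabel operator `ρ_{a→b}` applied to `H` is not useless,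
i.e. `H` has a vertex of label `a`. -/
def relabelUseful (a : Fin k) (H : LGraph k) : Prop :=
  ∃ v : H.V, H.lab v = a

/-- `relabelSeq i [a₁, …, a_q] H = ρ_{a₁→i}(⋯(ρ_{a_q→i}(H))⋯)`. -/
def relabelSeq (i : Fin k) : List (Fin k) → LGraph k → LGraph k
  | [], H => H
  | a :: as, H => relabel a i (relabelSeq i as H)

/-- None of the relabel operators in `relabelSeq i as H` is useless (this includes
that none of them has the form `ρ_{a→a}`). -/
def relabelSeqUseful (i : Fin k) : List (Fin k) → LGraph k → Prop
  | [], _ => True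
  | a :: as, H => relabelSeqUseful i as H ∧ a ≠ i ∧ relabelUseful a (relabelSeq i as H)

end LGraph

open LGraph

/-!
The relabel sequence acts on labels as `x ↦ if x ∈ as then i else x`, which sends `b` to `i`.
So the vertex created by `θ_b` ends up with label `i` and is swallowed by the outer `θ_i`
together with every other vertex of final label `i`. Its neighbourhood is the union of the
neighbourhoods of the `b`-vertices it replaced, and these vertices would have been swallowed
by `θ_i` anyway, so the outer fuse sees the same union of neighbourhoods with or without `θ_b`.
-/

namespace LGraph

variable {k : ℕ}

def relabelBy (f : Fin k → Fin k) (H : LGraph k) : LGraph k where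
  V := H.V
  G := H.G
  lab := f ∘ H.lab

theorem relabelSeq_eq_relabelBy (i : Fin k) (as : List (Fin k)) (H : LGraph k) :
    relabelSeq i as H = relabelBy (fun x => if x ∈ as then i else x) H := by
  induction as with
  | nil => rfl
  | cons a as ih =>
    rw [relabelSeq, ih]
    simp only [relabel, relabelBy, Function.comp_apply, List.mem_cons]
    congr 1
    funext v
    split_ifs <;> simp_all

theorem exists_adj_fuse_iff {b : Fin k} {H : LGraph k} (P : Fin k → Prop) (hP : P b)
    (v : {v : H.V // H.lab v ≠ b}) :
    (∃ w, P ((fuse b H).lab w) ∧ (fuse b H).G.Adj w (some v)) ↔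
      ∃ w, P (H.lab w) ∧ H.G.Adj w v := by
  constructor
  · rintro ⟨_ | w, hw, hadj⟩
    · obtain ⟨w, hwb, hadj⟩ := hadj
      exact ⟨w, hwb ▸ hP, hadj⟩
    · exact ⟨w, hw, hadj⟩
  · rintro ⟨w, hw, hadj⟩
    by_cases hwb : H.lab w = b
    · exact ⟨none, hP, w, hwb, hadj⟩
    · exact ⟨some ⟨w, hwb⟩, hw, hadj⟩

variable {f : Fin k → Fin k} {i b : Fin k}

def fuseRelabelByFuseEquiv (hf : f b = i) (H : LGraph k) :
    (fuse i (relabelBy f (fuse b H))).V ≃ (fuse i (relabelBy f H)).V where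
  toFun
    | none => none
    | some ⟨some u, h⟩ => some ⟨u.1, h⟩
    | some ⟨none, h⟩ => absurd hf h
  invFun
    | none => none
    | some ⟨v, h⟩ => some ⟨some ⟨v, fun hv => h (hv ▸ hf :)⟩, h⟩
  left_inv := by
    rintro (_ | ⟨_ | u, h⟩)
    · rfl
    · exact absurd hf h
    · rfl
  right_inv := by rintro (_ | ⟨v, h⟩) <;> rfl

theorem fuse_relabelBy_fuse (hf : f b = i) (H : LGraph k) :
    LIso (fuse i (relabelBy f (fuse b H))) (fuse i (relabelBy f H)) := by
  refine ⟨⟨fuseRelabelByFuseEquiv hf H, ?_⟩, ?_⟩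
  · rintro (_ | ⟨_ | u, hu⟩) (_ | ⟨_ | v, hv⟩)
    all_goals first
      | exact absurd hf ‹¬f b = i›
      | exact Iff.rfl
      | skip
    · exact (exists_adj_fuse_iff (f · = i) hf v).symm
    · exact (SimpleGraph.adj_comm _ _ _).trans
        ((exists_adj_fuse_iff (f · = i) hf u).symm.trans
          (SimpleGraph.adj_comm (fuse i (relabelBy f (fuse b H))).G none (some ⟨some u, hu⟩)))
  · rintro (_ | ⟨_ | u, h⟩)
    · rfl
    · exact absurd hf h
    · rfl

end LGraph

theorem fuse_relabelSeq_fuse_absorb_general {k : ℕ} (H : LGraph k) (i b : Fin k)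
    (as : List (Fin k)) (hb : b ∈ as ∨ b = i) :
    LIso (fuse i (relabelSeq i as (fuse b H)))
         (fuse i (relabelSeq i as H)) := by
  rw [relabelSeq_eq_relabelBy, relabelSeq_eq_relabelBy]
  refine fuse_relabelBy_fuse ?_ H
  rcases hb with hb | rfl <;> simp [*]

/-- rule 10: if `b ∈ {a₁, …, a_q, i}`, then
`θ_i(ρ_{a₁→i}(⋯ρ_{a_q→i}(θ_b(H))⋯)) = θ_i(ρ_{a₁→i}(⋯ρ_{a_q→i}(H)⋯))`
provided that no operator occurrence on the left-hand side is useless. -/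
theorem fuse_relabelSeq_fuse_absorb {k : ℕ} (H : LGraph k) (i b : Fin k)
    (as : List (Fin k)) (hb : b ∈ as ∨ b = i)
    (hinner : fuseUseful b H)
    (hseq : relabelSeqUseful i as (fuse b H))
    (hfuse : fuseUseful i (relabelSeq i as (fuse b H))) :
    LIso (fuse i (relabelSeq i as (fuse b H)))
         (fuse i (relabelSeq i as H)) :=
  fuse_relabelSeq_fuse_absorb_general H i b as hb
end

section
/- For every fuse-k-expression φ there exists a fuse-k-expression φ' whose value is the same k-labeled graph (up to label-preserving isomorphism), which contains no useless operator occurrences, and such that every fuse subterm θ_i(ψ) of φ' has its argument of the form ψ = θ_{j_1}(θ_{j_2}(⋯ θ_{j_r}(ψ_1 ⊕ ψ_2) ⋯)) for some r ≥ 0 and labels j_1, …, j_r; that is, every inner node on the path from a fuse node to the topmost union node below it is itself a fuse node. -/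
/-! ### Fuse-`k`-expressions -/

/-- A fuse-`k`-expression: introduce a vertex, disjoint union, join, relabel, fuse. -/
inductive FuseExpr (k : ℕ) where
  | intro (i : Fin k)
  | union (φ1 φ2 : FuseExpr k)
  | join (i j : Fin k) (φ : FuseExpr k)
  | relabel (i j : Fin k) (φ : FuseExpr k)
  | fuse (i : Fin k) (φ : FuseExpr k)

namespace FuseExpr

variable {k : ℕ}

/-- The single-vertex `k`-labeled graph with label `i`. -/
def singleVertex (i : Fin k) : LGraph k := ⟨PUnit, ⊥, fun _ => i⟩

/-- The `k`-labeled graph `G^φ` obtained by evaluating a fuse-`k`-expression. -/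
def eval : FuseExpr k → LGraph k
  | .intro i => singleVertex i
  | .union φ1 φ2 => LGraph.union φ1.eval φ2.eval
  | .join i j φ => LGraph.join i j φ.eval
  | .relabel i j φ => LGraph.relabel i j φ.eval
  | .fuse i φ => LGraph.fuse i φ.eval

/-- Well-formedness of a fuse-`k`-expression: joins and relabels use two distinct labels,
and every fuse `θ_i` is applied to a graph having a vertex of label `i`. -/
def WF : FuseExpr k → Prop
  | .intro _ => True
  | .union φ1 φ2 => φ1.WF ∧ φ2.WF
  | .join i j φ => i ≠ j ∧ φ.WF
  | .relabel i j φ => i ≠ j ∧ φ.WF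
  | .fuse i φ => φ.WF ∧ ∃ v, φ.eval.lab v = i

end FuseExpr

/-- A graph `G` admits a fuse-`k`-expression if some well-formed fuse-`k`-expression
evaluates to a labeled graph whose underlying simple graph is isomorphic to `G`. -/
def FuseAdmits {V : Type} (k : ℕ) (G : SimpleGraph V) : Prop :=
  ∃ φ : FuseExpr k, φ.WF ∧ Nonempty (φ.eval.G ≃g G)

namespace FuseExpr

variable {k : ℕ}

/-- No operator occurrence in the fuse-`k`-expression is useless: every join creates a
new edge, every fuse fuses at least two vertices, every relabel `ρ_{i→j}` has `i ≠ j`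
and is applied to a graph with a vertex of label `i`. -/
def NoUseless : FuseExpr k → Prop
  | .intro _ => True
  | .union φ1 φ2 => φ1.NoUseless ∧ φ2.NoUseless
  | .join i j φ => i ≠ j ∧ LGraph.joinUseful i j φ.eval ∧ φ.NoUseless
  | .relabel i j φ => i ≠ j ∧ LGraph.relabelUseful i φ.eval ∧ φ.NoUseless
  | .fuse i φ => LGraph.fuseUseful i φ.eval ∧ φ.NoUseless

/-- The expression is a chain of fuse operators `θ_{j₁}(θ_{j₂}(⋯θ_{j_r}(ψ₁ ⊕ ψ₂)⋯))`
(with `r ≥ 0`) ending in a union node. -/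
def IsFuseChainToUnion : FuseExpr k → Prop
  | .union _ _ => True
  | .fuse _ ψ => ψ.IsFuseChainToUnion
  | _ => False

/-- Every fuse subterm `θ_i(ψ)` has its argument `ψ` of the form
`θ_{j₁}(⋯θ_{j_r}(ψ₁ ⊕ ψ₂)⋯)`, i.e. every inner node on the path from a fuse node to
the topmost union node below it is itself a fuse node. -/
def FusesAboveUnions : FuseExpr k → Prop
  | .intro _ => True
  | .union φ1 φ2 => φ1.FusesAboveUnions ∧ φ2.FusesAboveUnions
  | .join _ _ φ => φ.FusesAboveUnions
  | .relabel _ _ φ => φ.FusesAboveUnions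
  | .fuse _ φ => φ.IsFuseChainToUnion ∧ φ.FusesAboveUnions

end FuseExpr

/-- The `k`-labeled graph `H` has exactly one vertex of label `i`. -/
def ExactlyOne {k : ℕ} (H : LGraph k) (i : Fin k) : Prop :=
  ∃! v : H.V, H.lab v = i

/-- The `k`-labeled graph `H` has exactly two vertices of label `i`. -/
def ExactlyTwo {k : ℕ} (H : LGraph k) (i : Fin k) : Prop :=
  ∃ u v : H.V, u ≠ v ∧ H.lab u = i ∧ H.lab v = i ∧
    ∀ w : H.V, H.lab w = i → w = u ∨ w = v

namespace FuseExpr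

variable {k : ℕ}

/-- The expression is a chain of fuses ending in a union `ψ₁ ⊕ ψ₂` such that each of
`G^{ψ₁}` and `G^{ψ₂}` contains exactly one vertex of label `i` (so the two vertices of
label `i` above the union come one from each side). -/
def ChainWithOneFromEachSide (i : Fin k) : FuseExpr k → Prop
  | .union ψ1 ψ2 => ExactlyOne ψ1.eval i ∧ ExactlyOne ψ2.eval i
  | .fuse _ ψ => ChainWithOneFromEachSide i ψ
  | _ => False

/-- Every fuse subterm `θ_i(ψ)` of the expression satisfies: `ψ` is a chain of fuses
over a union, `G^ψ` contains exactly two vertices of label `i`, and of these two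
vertices one comes from each side of the union. -/
def FusesExactlyTwoFromDifferentSides : FuseExpr k → Prop
  | .intro _ => True
  | .union φ1 φ2 => φ1.FusesExactlyTwoFromDifferentSides ∧ φ2.FusesExactlyTwoFromDifferentSides
  | .join _ _ φ => φ.FusesExactlyTwoFromDifferentSides
  | .relabel _ _ φ => φ.FusesExactlyTwoFromDifferentSides
  | .fuse i φ => ExactlyTwo φ.eval i ∧ φ.ChainWithOneFromEachSide i ∧
      φ.FusesExactlyTwoFromDifferentSides

end FuseExpr

/-!
Normalize bottom-up, dropping useless operators as they arise (each of them acts as the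
identity up to isomorphism). The only real work is a fuse `θ_i` applied to an already
normalized expression: it is pushed down to the nearest unions. For this one pushes the
more general operation `merge S t` (fuse all vertices with a label in `S` into one vertex
of label `t ∈ S`): it swallows fuses `θ_j` with `j ∈ S`, commutes with the other fuses,
turns a join `η_{a,b}` into `η_{a',b'}` with the merged labels replaced by `t` (or into
nothing when `a, b ∈ S`), and passes through a relabel `ρ_{c→d}` by adding `c` to `S` if
`d ∈ S` and removing `c` from `S` otherwise. At a union it becomes `θ_t` applied to the
union of the two sides, each relabelled by `ρ_{c→t}` for `c ∈ S`. Fuses are therefore only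
created directly above unions or above fuses created this way.
-/

namespace LGraph

variable {k : ℕ}

theorem LIso.of_equiv {H₁ H₂ : LGraph k} (e : H₁.V ≃ H₂.V)
    (hadj : ∀ u v, H₂.G.Adj (e u) (e v) ↔ H₁.G.Adj u v) (hlab : ∀ v, H₂.lab (e v) = H₁.lab v) :
    LIso H₁ H₂ :=
  ⟨⟨e, hadj _ _⟩, hlab⟩

-- Giving `f` and `g` as functions (rather than as an `Equiv`) lets `simp` and `dsimp` reduce
-- `f x` on the vertex types of the graphs at hand.
theorem LIso.of_inverses {H₁ H₂ : LGraph k} (f : H₁.V → H₂.V) (g : H₂.V → H₁.V)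
    (hgf : Function.LeftInverse g f) (hfg : Function.RightInverse g f)
    (hadj : ∀ u v, H₂.G.Adj (f u) (f v) ↔ H₁.G.Adj u v) (hlab : ∀ v, H₂.lab (f v) = H₁.lab v) :
    LIso H₁ H₂ :=
  .of_equiv ⟨f, g, hgf, hfg⟩ hadj hlab

@[refl] theorem LIso.refl (H : LGraph k) : LIso H H :=
  .of_equiv (.refl _) (fun _ _ => .rfl) fun _ => rfl

@[symm] theorem LIso.symm {H₁ H₂ : LGraph k} : LIso H₁ H₂ → LIso H₂ H₁
  | ⟨e, he⟩ => ⟨e.symm, fun v => by simpa using (he (e.symm v)).symm⟩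

@[trans] theorem LIso.trans {H₁ H₂ H₃ : LGraph k} : LIso H₁ H₂ → LIso H₂ H₃ → LIso H₁ H₃
  | ⟨e, he⟩, ⟨f, hf⟩ => ⟨e.trans f, fun v => (hf (e v)).trans (he v)⟩

instance : @Trans (LGraph k) (LGraph k) (LGraph k) LIso LIso LIso := ⟨LIso.trans⟩

theorem LIso.exists_lab {H H' : LGraph k} {p : Fin k → Prop} :
    LIso H H' → (∃ v, p (H.lab v)) → ∃ v, p (H'.lab v)
  | ⟨e, he⟩, ⟨v, hv⟩ => ⟨e v, by rwa [he]⟩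

theorem LIso.union {H₁ H₁' H₂ H₂' : LGraph k} :
    LIso H₁ H₁' → LIso H₂ H₂' → LIso (H₁.union H₂) (H₁'.union H₂')
  | ⟨e₁, he₁⟩, ⟨e₂, he₂⟩ => ⟨e₁.sumCongr e₂, by rintro (v | v); exacts [he₁ v, he₂ v]⟩

theorem LIso.join {H H' : LGraph k} (a b : Fin k) : LIso H H' → LIso (H.join a b) (H'.join a b)
  | ⟨e, he⟩ => ⟨⟨e.toEquiv, fun {u v} => or_congr e.map_rel_iff <|
      and_congr e.injective.ne_iff <| by rw [← he u, ← he v]; rfl⟩, he⟩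

theorem LIso.relabel {H H' : LGraph k} (a b : Fin k) :
    LIso H H' → LIso (H.relabel a b) (H'.relabel a b)
  | ⟨e, he⟩ => ⟨e, fun v => congrArg (fun l => if l = a then b else l) (he v)⟩

theorem LIso.fuse {H H' : LGraph k} (i : Fin k) : LIso H H' → LIso (H.fuse i) (H'.fuse i)
  | ⟨e, he⟩ => by
    have hlab (v : H.V) : H.lab v = i ↔ H'.lab (e v) = i := by rw [he]
    refine .of_equiv (Equiv.optionCongr (e.toEquiv.subtypeEquiv fun v => (hlab v).not)) ?_ ?_
    · rintro (_ | u) (_ | v)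
      · exact .rfl
      · exact (e.toEquiv.exists_congr fun w => and_congr (hlab w) e.map_rel_iff.symm).symm
      · exact (e.toEquiv.exists_congr fun w => and_congr (hlab w) e.map_rel_iff.symm).symm
      · exact e.map_rel_iff
    · rintro (_ | u)
      · rfl
      · exact he u

section useless

variable {a b i : Fin k} {H : LGraph k}

theorem relabel_liso_self (h : a = b ∨ ¬ relabelUseful a H) : LIso (H.relabel a b) H :=
  .of_inverses id id (fun _ => rfl) (fun _ => rfl) (fun _ _ => .rfl) fun v => by
    dsimp only [LGraph.relabel, relabelUseful] at h ⊢; grind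

theorem join_liso_self (h : ¬ joinUseful a b H) : LIso (H.join a b) H :=
  .of_inverses id id (fun _ => rfl) (fun _ => rfl) (fun u v => by
    dsimp only [LGraph.join, joinUseful] at h ⊢; grind [SimpleGraph.adj_comm]) fun _ => rfl

theorem fuse_liso_self (hex : ∃ v, H.lab v = i) (h : ¬ fuseUseful i H) : LIso (H.fuse i) H := by
  obtain ⟨v, hv⟩ := hex
  have huniq (w : H.V) (hw : H.lab w = i) : w = v := by
    by_contra hne
    exact h ⟨w, v, hne, hw, hv⟩
  refine .of_inverses (fun | none => v | some u => u.1)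
    (fun w => if hw : H.lab w = i then none else some ⟨w, hw⟩) ?_ ?_ ?_ ?_
  · rintro (_ | ⟨u, hu⟩)
    · exact dif_pos hv
    · exact dif_neg hu
  · intro w
    by_cases hw : H.lab w = i
    · simpa [hw] using (huniq w hw).symm
    · simp [hw]
  · rintro (_ | u) (_ | w) <;> dsimp only [LGraph.fuse] <;> grind [SimpleGraph.irrefl]
  · rintro (_ | u)
    exacts [hv, rfl]

end useless

def relabelSet (S : Finset (Fin k)) (t : Fin k) (H : LGraph k) : LGraph k where
  V := H.V
  G := H.G
  lab v := if H.lab v ∈ S then t else H.lab v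

section relabelSet

variable {S : Finset (Fin k)} {c t : Fin k}

theorem relabelSet_empty (t : Fin k) (H : LGraph k) : LIso (H.relabelSet ∅ t) H :=
  .of_inverses id id (fun _ => rfl) (fun _ => rfl) (fun _ _ => .rfl) fun v =>
    show H.lab v = if H.lab v ∈ ∅ then t else H.lab v from (if_neg (Finset.notMem_empty _)).symm

theorem relabel_relabelSet (H : LGraph k) :
    LIso ((H.relabelSet S t).relabel c t) (H.relabelSet (insert c S) t) :=
  .of_inverses id id (fun _ => rfl) (fun _ => rfl) (fun _ _ => .rfl) fun _ => by
    dsimp only [LGraph.relabel, relabelSet]; grind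

theorem relabelSet_union (H₁ H₂ : LGraph k) :
    LIso ((H₁.union H₂).relabelSet S t) ((H₁.relabelSet S t).union (H₂.relabelSet S t)) :=
  .of_inverses id id (fun _ => rfl) (fun _ => rfl) (fun _ _ => .rfl) (by rintro (_ | _) <;> rfl)

end relabelSet

def merge (S : Finset (Fin k)) (t : Fin k) (H : LGraph k) : LGraph k where
  V := Option {v : H.V // H.lab v ∉ S}
  G :=
    { Adj := fun x y =>
        match x, y with
        | some u, some v => H.G.Adj u.1 v.1
        | some u, none => ∃ w, H.lab w ∈ S ∧ H.G.Adj u.1 w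
        | none, some v => ∃ w, H.lab w ∈ S ∧ H.G.Adj w v.1
        | none, none => False
      symm := by
        constructor
        rintro (_ | u) (_ | v) h
        · exact h
        · obtain ⟨w, hw, ha⟩ := h
          exact ⟨w, hw, ha.symm⟩
        · obtain ⟨w, hw, ha⟩ := h
          exact ⟨w, hw, ha.symm⟩
        · exact H.G.symm.symm _ _ h
      loopless := by
        constructor
        rintro (_ | v) h
        · exact h
        · exact H.G.loopless.irrefl v.1 h }
  lab
    | some u => H.lab u.1
    | none => t

section merge

variable {S : Finset (Fin k)} {a b c d i j s t : Fin k}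

theorem fuse_liso_merge (i : Fin k) (H : LGraph k) : LIso (H.fuse i) (H.merge {i} i) := by
  refine .of_inverses (Option.map fun v => ⟨v.1, by simpa using v.2⟩)
    (Option.map fun v => ⟨v.1, by simpa using v.2⟩)
    (by rintro (_ | _) <;> rfl) (by rintro (_ | _) <;> rfl) ?_ ?_
  · rintro (_ | u) (_ | v) <;> dsimp only [merge, LGraph.fuse, Option.map] <;> simp
  · rintro (_ | u) <;> rfl

theorem merge_singleVertex (hi : i ∈ S) :
    LIso ((FuseExpr.singleVertex i).merge S t) (FuseExpr.singleVertex t) := by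
  have hnone (x : ((FuseExpr.singleVertex i).merge S t).V) : x = none := by
    rcases x with _ | ⟨_, h⟩
    exacts [rfl, absurd hi h]
  refine .of_inverses (fun _ => ⟨⟩) (fun _ => none) (fun x => (hnone x).symm) (fun _ => rfl)
    (fun x y => ?_) (fun x => ?_) <;> rw [hnone x]
  · rw [hnone y]
    exact iff_of_false id id
  · rfl

theorem merge_liso_fuse_relabelSet (ht : t ∈ S) (H : LGraph k) :
    LIso (H.merge S t) ((H.relabelSet S t).fuse t) := by
  have hmem (v : H.V) : H.lab v ∈ S ↔ (H.relabelSet S t).lab v = t := by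
    dsimp only [relabelSet]; grind
  refine .of_inverses (Option.map fun v => ⟨v.1, (hmem v.1).not.mp v.2⟩)
    (Option.map fun v => ⟨v.1, (hmem v.1).not.mpr v.2⟩)
    (by rintro (_ | _) <;> rfl) (by rintro (_ | _) <;> rfl) ?_ ?_
  · rintro (_ | u) (_ | v) <;> dsimp only [merge, LGraph.fuse, relabelSet, Option.map] <;> grind
  · rintro (_ | u)
    exacts [rfl, if_neg u.2]

theorem merge_fuse_of_mem (hj : j ∈ S) (H : LGraph k) :
    LIso ((H.fuse j).merge S t) (H.merge S t) := by
  refine .of_inverses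
    (fun
      | none => none
      | some ⟨some u, h⟩ => some ⟨u.1, h⟩
      | some ⟨none, h⟩ => absurd hj h)
    (fun
      | none => none
      | some ⟨v, h⟩ => some ⟨some ⟨v, fun hv => h (hv ▸ hj)⟩, h⟩)
    (by rintro (_ | ⟨_ | u, h⟩) <;> first | rfl | exact absurd hj h)
    (by rintro (_ | ⟨v, h⟩) <;> rfl) ?_ ?_
  · rintro (_ | ⟨_ | u, hu⟩) (_ | ⟨_ | v, hv⟩) <;> first
      | exact absurd hj ‹_›
      | (simp only [merge, LGraph.fuse, Option.exists, Subtype.exists] <;> grind)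
  · rintro (_ | ⟨_ | u, h⟩) <;> first | rfl | exact absurd hj h

theorem merge_fuse_of_not_mem (hj : j ∉ S) (ht : t ∈ S) (H : LGraph k) :
    LIso ((H.fuse j).merge S t) ((H.merge S t).fuse j) := by
  have htj : t ≠ j := by rintro rfl; exact hj ht
  refine .of_inverses
    (fun
      | none => some ⟨none, htj⟩
      | some ⟨none, _⟩ => none
      | some ⟨some u, h⟩ => some ⟨some ⟨u.1, h⟩, u.2⟩)
    (fun
      | none => some ⟨none, hj⟩
      | some ⟨none, _⟩ => none
      | some ⟨some v, h⟩ => some ⟨some ⟨v.1, h⟩, v.2⟩)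
    (by rintro (_ | ⟨_ | u, h⟩) <;> rfl) (by rintro (_ | ⟨_ | u, h⟩) <;> rfl) ?_ ?_
  · rintro (_ | ⟨_ | u, hu⟩) (_ | ⟨_ | v, hv⟩) <;>
      simp only [merge, LGraph.fuse, Option.exists, Subtype.exists] <;> grind
  · rintro (_ | ⟨_ | u, h⟩) <;> rfl

theorem merge_join_of_mem (ha : a ∈ S) (hb : b ∈ S) (H : LGraph k) :
    LIso ((H.join a b).merge S t) (H.merge S t) := by
  refine .of_inverses (Option.map fun v => ⟨v.1, v.2⟩) (Option.map fun v => ⟨v.1, v.2⟩)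
    (by rintro (_ | _) <;> rfl) (by rintro (_ | _) <;> rfl) ?_ ?_
  · rintro (_ | u) (_ | v) <;> dsimp only [merge, LGraph.join, Option.map] <;> grind
  · rintro (_ | u) <;> rfl

-- A join with an end in `S` needs a vertex of that label: its new edges end at the merged vertex.
theorem merge_join {H : LGraph k} (ht : t ∈ S) (ha : ∃ u, H.lab u = a) (hb : ∃ v, H.lab v = b) :
    LIso ((H.join a b).merge S t)
      ((H.merge S t).join (if a ∈ S then t else a) (if b ∈ S then t else b)) := by
  refine .of_inverses (Option.map fun v => ⟨v.1, v.2⟩) (Option.map fun v => ⟨v.1, v.2⟩)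
    (by rintro (_ | _) <;> rfl) (by rintro (_ | _) <;> rfl) ?_ ?_
  · rintro (_ | u) (_ | v) <;> dsimp only [merge, LGraph.join, Option.map] <;> grind
  · rintro (_ | u) <;> rfl

theorem merge_relabel_of_mem (hd : d ∈ S) (H : LGraph k) :
    LIso ((H.relabel c d).merge S t) (H.merge (insert c S) t) := by
  have hmem (v : H.V) : (H.relabel c d).lab v ∈ S ↔ H.lab v ∈ insert c S := by
    dsimp only [LGraph.relabel]; grind
  refine .of_inverses (Option.map fun v => ⟨v.1, (hmem v.1).not.mp v.2⟩)
    (Option.map fun v => ⟨v.1, (hmem v.1).not.mpr v.2⟩)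
    (by rintro (_ | _) <;> rfl) (by rintro (_ | _) <;> rfl) ?_ ?_
  · rintro (_ | u) (_ | v) <;> dsimp only [merge, LGraph.relabel, Option.map] <;> grind
  · rintro (_ | u)
    · rfl
    · dsimp only [merge, LGraph.relabel, Option.map]; grind

theorem merge_relabel (hd : d ∉ S) (hc : c ≠ t) (H : LGraph k) :
    LIso ((H.relabel c d).merge S t) ((H.merge (S.erase c) t).relabel c d) := by
  have hmem (v : H.V) : (H.relabel c d).lab v ∈ S ↔ H.lab v ∈ S.erase c := by
    dsimp only [LGraph.relabel]; grind
  refine .of_inverses (Option.map fun v => ⟨v.1, (hmem v.1).not.mp v.2⟩)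
    (Option.map fun v => ⟨v.1, (hmem v.1).not.mpr v.2⟩)
    (by rintro (_ | _) <;> rfl) (by rintro (_ | _) <;> rfl) ?_ ?_
  · rintro (_ | u) (_ | v) <;> dsimp only [merge, LGraph.relabel, Option.map] <;> grind
  · rintro (_ | u)
    exacts [if_neg hc.symm, rfl]

-- `ρ_{t→d}` renames the target label away, so merge into another label `s ∈ S` and rename it
-- to `t` at the end.
theorem merge_relabel_target (hd : d ∉ S) (hs : s ∈ S) (hst : s ≠ t) (H : LGraph k) :
    LIso ((H.relabel t d).merge S t) (((H.merge (S.erase t) s).relabel t d).relabel s t) := by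
  have hmem (v : H.V) : (H.relabel t d).lab v ∈ S ↔ H.lab v ∈ S.erase t := by
    dsimp only [LGraph.relabel]; grind
  refine .of_inverses (Option.map fun v => ⟨v.1, (hmem v.1).not.mp v.2⟩)
    (Option.map fun v => ⟨v.1, (hmem v.1).not.mpr v.2⟩)
    (by rintro (_ | _) <;> rfl) (by rintro (_ | _) <;> rfl) ?_ ?_
  · rintro (_ | u) (_ | v) <;> dsimp only [merge, LGraph.relabel, Option.map] <;> grind
  · rintro (_ | u)
    all_goals dsimp only [merge, LGraph.relabel, Option.map]; grind

end merge

end LGraph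

namespace FuseExpr

open LGraph

variable {k : ℕ}

section smart

open scoped Classical

noncomputable def mkRelabel (a b : Fin k) (φ : FuseExpr k) : FuseExpr k :=
  if a ≠ b ∧ relabelUseful a φ.eval then .relabel a b φ else φ

noncomputable def mkJoin (a b : Fin k) (φ : FuseExpr k) : FuseExpr k :=
  if a ≠ b ∧ joinUseful a b φ.eval then .join a b φ else φ

noncomputable def mkFuse (i : Fin k) (φ : FuseExpr k) : FuseExpr k :=
  if fuseUseful i φ.eval then .fuse i φ else φ

variable {a b i : Fin k} {φ : FuseExpr k}

theorem eval_mkRelabel (a b : Fin k) (φ : FuseExpr k) :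
    LIso (mkRelabel a b φ).eval (φ.eval.relabel a b) := by
  unfold mkRelabel
  split_ifs with h
  · rfl
  · exact (relabel_liso_self (by tauto)).symm

theorem eval_mkJoin (hab : a ≠ b) (φ : FuseExpr k) :
    LIso (mkJoin a b φ).eval (φ.eval.join a b) := by
  unfold mkJoin
  split_ifs with h
  · rfl
  · exact (join_liso_self (by tauto)).symm

theorem eval_mkFuse (hex : ∃ v, φ.eval.lab v = i) : LIso (mkFuse i φ).eval (φ.eval.fuse i) := by
  unfold mkFuse
  split_ifs with h
  · rfl
  · exact (fuse_liso_self hex h).symm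

theorem NoUseless.mkRelabel (h : φ.NoUseless) : (mkRelabel a b φ).NoUseless := by
  unfold FuseExpr.mkRelabel
  split_ifs with hu
  exacts [⟨hu.1, hu.2, h⟩, h]

theorem NoUseless.mkJoin (h : φ.NoUseless) : (mkJoin a b φ).NoUseless := by
  unfold FuseExpr.mkJoin
  split_ifs with hu
  exacts [⟨hu.1, hu.2, h⟩, h]

theorem NoUseless.mkFuse (h : φ.NoUseless) : (mkFuse i φ).NoUseless := by
  unfold FuseExpr.mkFuse
  split_ifs with hu
  exacts [⟨hu, h⟩, h]

theorem FusesAboveUnions.mkRelabel (h : φ.FusesAboveUnions) :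
    (mkRelabel a b φ).FusesAboveUnions := by
  unfold FuseExpr.mkRelabel
  split_ifs <;> exact h

theorem FusesAboveUnions.mkJoin (h : φ.FusesAboveUnions) : (mkJoin a b φ).FusesAboveUnions := by
  unfold FuseExpr.mkJoin
  split_ifs <;> exact h

theorem FusesAboveUnions.mkFuse (hc : φ.IsFuseChainToUnion) (h : φ.FusesAboveUnions) :
    (mkFuse i φ).FusesAboveUnions := by
  unfold FuseExpr.mkFuse
  split_ifs
  exacts [⟨hc, h⟩, h]

theorem IsFuseChainToUnion.mkFuse (h : φ.IsFuseChainToUnion) : (mkFuse i φ).IsFuseChainToUnion := by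
  unfold FuseExpr.mkFuse
  split_ifs <;> exact h

end smart

noncomputable def relabelAll (l : List (Fin k)) (t : Fin k) (φ : FuseExpr k) : FuseExpr k :=
  l.foldr (fun c ψ => mkRelabel c t ψ) φ

theorem eval_relabelAll (l : List (Fin k)) (t : Fin k) (φ : FuseExpr k) :
    LIso (relabelAll l t φ).eval (φ.eval.relabelSet l.toFinset t) := by
  induction l with
  | nil => exact (relabelSet_empty t _).symm
  | cons c l ih =>
    rw [List.toFinset_cons]
    exact (eval_mkRelabel c t _).trans ((ih.relabel c t).trans (relabel_relabelSet _))

section relabelAll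

variable {l : List (Fin k)} {t : Fin k} {φ : FuseExpr k}

theorem NoUseless.relabelAll (h : φ.NoUseless) : (relabelAll l t φ).NoUseless := by
  induction l with
  | nil => exact h
  | cons c l ih => exact ih.mkRelabel

theorem FusesAboveUnions.relabelAll (h : φ.FusesAboveUnions) :
    (relabelAll l t φ).FusesAboveUnions := by
  induction l with
  | nil => exact h
  | cons c l ih => exact ih.mkRelabel

end relabelAll

noncomputable def mergeExpr : FuseExpr k → Finset (Fin k) → Fin k → FuseExpr k
  | .intro _, _, t => .intro t
  | .union ψ₁ ψ₂, S, t => mkFuse t (.union (relabelAll S.toList t ψ₁) (relabelAll S.toList t ψ₂))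
  | .join a b ψ, S, t =>
    if a ∈ S ∧ b ∈ S then ψ.mergeExpr S t
    else mkJoin (if a ∈ S then t else a) (if b ∈ S then t else b) (ψ.mergeExpr S t)
  | .relabel c d ψ, S, t =>
    if d ∈ S then ψ.mergeExpr (insert c S) t
    else if c = t then
      if h : (S.erase t).Nonempty then
        mkRelabel h.choose t (mkRelabel t d (ψ.mergeExpr (S.erase t) h.choose))
      else .intro t -- unreachable when some vertex has a label in `S`
    else mkRelabel c d (ψ.mergeExpr (S.erase c) t)
  | .fuse j ψ, S, t => if j ∈ S then ψ.mergeExpr S t else mkFuse j (ψ.mergeExpr S t)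

theorem NoUseless.mergeExpr {ψ : FuseExpr k} (h : ψ.NoUseless) (S : Finset (Fin k)) (t : Fin k) :
    (ψ.mergeExpr S t).NoUseless := by
  induction ψ generalizing S t with
  | intro => trivial
  | union ψ₁ ψ₂ => exact NoUseless.mkFuse ⟨h.1.relabelAll, h.2.relabelAll⟩
  | join a b ψ ih =>
    simp only [FuseExpr.mergeExpr]
    split_ifs <;> first | exact ih h.2.2 S t | exact (ih h.2.2 S t).mkJoin
  | relabel c d ψ ih =>
    simp only [FuseExpr.mergeExpr]
    split_ifs
    exacts [ih h.2.2 _ t, (ih h.2.2 _ _).mkRelabel.mkRelabel, trivial, (ih h.2.2 _ t).mkRelabel]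
  | fuse j ψ ih =>
    simp only [FuseExpr.mergeExpr]
    split_ifs
    exacts [ih h.2 S t, (ih h.2 S t).mkFuse]

theorem IsFuseChainToUnion.mergeExpr {ψ : FuseExpr k} (h : ψ.IsFuseChainToUnion)
    (S : Finset (Fin k)) (t : Fin k) : (ψ.mergeExpr S t).IsFuseChainToUnion := by
  induction ψ generalizing S t with
  | union => exact IsFuseChainToUnion.mkFuse trivial
  | fuse j ψ ih =>
    simp only [FuseExpr.mergeExpr]
    split_ifs
    exacts [ih h S t, (ih h S t).mkFuse]
  | _ => exact h.elim

theorem FusesAboveUnions.mergeExpr {ψ : FuseExpr k} (h : ψ.FusesAboveUnions)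
    (S : Finset (Fin k)) (t : Fin k) : (ψ.mergeExpr S t).FusesAboveUnions := by
  induction ψ generalizing S t with
  | intro => trivial
  | union ψ₁ ψ₂ => exact FusesAboveUnions.mkFuse trivial ⟨h.1.relabelAll, h.2.relabelAll⟩
  | join a b ψ ih =>
    simp only [FuseExpr.mergeExpr]
    split_ifs <;> first | exact ih h S t | exact (ih h S t).mkJoin
  | relabel c d ψ ih =>
    simp only [FuseExpr.mergeExpr]
    split_ifs
    exacts [ih h _ t, (ih h _ _).mkRelabel.mkRelabel, trivial, (ih h _ t).mkRelabel]
  | fuse j ψ ih =>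
    simp only [FuseExpr.mergeExpr]
    split_ifs
    exacts [ih h.2 S t, (ih h.2 S t).mkFuse (h.1.mergeExpr S t)]

section eval_mergeExpr

variable {S : Finset (Fin k)} {t : Fin k}

theorem eval_mergeExpr_union (ψ₁ ψ₂ : FuseExpr k) (ht : t ∈ S)
    (hS : ∃ v, (ψ₁.union ψ₂).eval.lab v ∈ S) :
    LIso ((ψ₁.union ψ₂).mergeExpr S t).eval ((ψ₁.union ψ₂).eval.merge S t) := by
  set U := FuseExpr.union (relabelAll S.toList t ψ₁) (relabelAll S.toList t ψ₂)
  have hU : LIso U.eval ((ψ₁.eval.union ψ₂.eval).relabelSet S t) := by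
    have h := (eval_relabelAll S.toList t ψ₁).union (eval_relabelAll S.toList t ψ₂)
    rw [Finset.toList_toFinset] at h
    exact h.trans (relabelSet_union _ _).symm
  have hex : ∃ v, U.eval.lab v = t := by
    obtain ⟨v, hv⟩ := hS
    exact hU.symm.exists_lab (p := (· = t)) ⟨v, if_pos hv⟩
  exact (eval_mkFuse hex).trans ((hU.fuse t).trans (merge_liso_fuse_relabelSet ht _).symm)

theorem eval_mergeExpr_relabel {c d : Fin k} {ψ : FuseExpr k}
    (ih : ∀ {S : Finset (Fin k)} {t : Fin k}, t ∈ S → (∃ v, ψ.eval.lab v ∈ S) →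
      LIso (ψ.mergeExpr S t).eval (ψ.eval.merge S t))
    (ht : t ∈ S) (hS : ∃ v, (ψ.relabel c d).eval.lab v ∈ S) :
    LIso ((ψ.relabel c d).mergeExpr S t).eval ((ψ.relabel c d).eval.merge S t) := by
  obtain ⟨v, hv⟩ := hS
  change (if ψ.eval.lab v = c then d else ψ.eval.lab v) ∈ S at hv
  simp only [mergeExpr]
  by_cases hd : d ∈ S
  · rw [if_pos hd]
    have hS' : ∃ v, ψ.eval.lab v ∈ insert c S := ⟨v, by grind⟩
    exact (ih (Finset.mem_insert_of_mem ht) hS').trans (merge_relabel_of_mem hd _).symm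
  rw [if_neg hd]
  have hvS : ψ.eval.lab v ∈ S.erase c := by grind
  by_cases hct : c = t
  · subst hct
    have hne : (S.erase c).Nonempty := ⟨_, hvS⟩
    rw [if_pos rfl, dif_pos hne]
    have hs := hne.choose_spec
    calc LIso _ (((ψ.mergeExpr (S.erase c) hne.choose).eval.relabel c d).relabel hne.choose c) :=
          (eval_mkRelabel _ _ _).trans ((eval_mkRelabel _ _ _).relabel _ _)
      LIso _ (((ψ.eval.merge (S.erase c) hne.choose).relabel c d).relabel hne.choose c) :=
          ((ih hs ⟨v, hvS⟩).relabel _ _).relabel _ _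
      LIso _ ((ψ.eval.relabel c d).merge S c) :=
          (merge_relabel_target hd (Finset.mem_of_mem_erase hs) (Finset.ne_of_mem_erase hs) _).symm
  · rw [if_neg hct]
    have hχ := ih (Finset.mem_erase.2 ⟨Ne.symm hct, ht⟩) ⟨v, hvS⟩
    exact (eval_mkRelabel _ _ _).trans ((hχ.relabel c d).trans (merge_relabel hd hct _).symm)

theorem eval_mergeExpr {ψ : FuseExpr k} (hψ : ψ.NoUseless) (ht : t ∈ S)
    (hS : ∃ v, ψ.eval.lab v ∈ S) : LIso (ψ.mergeExpr S t).eval (ψ.eval.merge S t) := by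
  induction ψ generalizing S t with
  | intro i =>
    obtain ⟨_, hi⟩ := hS
    exact (merge_singleVertex hi).symm
  | union ψ₁ ψ₂ => exact eval_mergeExpr_union ψ₁ ψ₂ ht hS
  | join a b ψ ih =>
    obtain ⟨hab, ⟨u, v, -, hu, hv, -⟩, hψ⟩ := hψ
    have hχ := ih hψ ht hS
    simp only [mergeExpr]
    by_cases hmem : a ∈ S ∧ b ∈ S
    · rw [if_pos hmem]
      exact hχ.trans (merge_join_of_mem hmem.1 hmem.2 _).symm
    · rw [if_neg hmem]
      have hab' : (if a ∈ S then t else a) ≠ (if b ∈ S then t else b) := by grind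
      exact (eval_mkJoin hab' _).trans ((hχ.join _ _).trans (merge_join ht ⟨u, hu⟩ ⟨v, hv⟩).symm)
  | relabel c d ψ ih => exact eval_mergeExpr_relabel (ih hψ.2.2) ht hS
  | fuse j ψ ih =>
    obtain ⟨⟨u, -, -, hu, -⟩, hψ⟩ := hψ
    simp only [mergeExpr]
    by_cases hj : j ∈ S
    · rw [if_pos hj]
      exact (ih hψ ht ⟨u, hu ▸ hj⟩).trans (merge_fuse_of_mem hj _).symm
    rw [if_neg hj]
    have hS' : ∃ v, ψ.eval.lab v ∈ S := by
      obtain ⟨(_ | ⟨v, _⟩), hv⟩ := hS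
      exacts [absurd hv hj, ⟨v, hv⟩]
    have hχ := ih hψ ht hS'
    have hex : ∃ v, (ψ.mergeExpr S t).eval.lab v = j :=
      hχ.symm.exists_lab (p := (· = j)) ⟨some ⟨u, fun h => hj (hu ▸ h)⟩, hu⟩
    exact (eval_mkFuse hex).trans ((hχ.fuse j).trans (merge_fuse_of_not_mem hj ht _).symm)

end eval_mergeExpr

noncomputable def normalize : FuseExpr k → FuseExpr k
  | .intro i => .intro i
  | .union φ₁ φ₂ => .union φ₁.normalize φ₂.normalize
  | .join a b φ => mkJoin a b φ.normalize
  | .relabel a b φ => mkRelabel a b φ.normalize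
  | .fuse i φ => φ.normalize.mergeExpr {i} i

theorem noUseless_normalize (φ : FuseExpr k) : φ.normalize.NoUseless := by
  induction φ with
  | intro => trivial
  | union φ₁ φ₂ ih₁ ih₂ => exact ⟨ih₁, ih₂⟩
  | join a b φ ih => exact ih.mkJoin
  | relabel a b φ ih => exact ih.mkRelabel
  | fuse i φ ih => exact ih.mergeExpr _ _

theorem fusesAboveUnions_normalize (φ : FuseExpr k) : φ.normalize.FusesAboveUnions := by
  induction φ with
  | intro => trivial
  | union φ₁ φ₂ ih₁ ih₂ => exact ⟨ih₁, ih₂⟩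
  | join a b φ ih => exact ih.mkJoin
  | relabel a b φ ih => exact ih.mkRelabel
  | fuse i φ ih => exact ih.mergeExpr _ _

theorem eval_normalize {φ : FuseExpr k} (hφ : φ.WF) : LIso φ.normalize.eval φ.eval := by
  induction φ with
  | intro => rfl
  | union φ₁ φ₂ ih₁ ih₂ => exact (ih₁ hφ.1).union (ih₂ hφ.2)
  | join a b φ ih => exact (eval_mkJoin hφ.1 _).trans ((ih hφ.2).join a b)
  | relabel a b φ ih => exact (eval_mkRelabel a b _).trans ((ih hφ.2).relabel a b)
  | fuse i φ ih =>
    have h := ih hφ.1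
    have hex : ∃ v, φ.normalize.eval.lab v ∈ ({i} : Finset (Fin k)) :=
      h.symm.exists_lab (p := (· ∈ ({i} : Finset (Fin k)))) (by simpa using hφ.2)
    calc LIso _ (φ.normalize.eval.merge {i} i) :=
          eval_mergeExpr (noUseless_normalize φ) (Finset.mem_singleton_self i) hex
      LIso _ (φ.normalize.eval.fuse i) := (fuse_liso_merge i _).symm
      LIso _ (φ.eval.fuse i) := h.fuse i

end FuseExpr

/-- Every fuse-`k`-expression can be transformed into an equivalent
one without useless operator occurrences in which every fuse node is followed below
only by fuse nodes until a union node is reached. -/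
theorem exists_fuses_above_unions {k : ℕ} (φ : FuseExpr k) (hwf : φ.WF) :
    ∃ φ' : FuseExpr k, LGraph.LIso φ'.eval φ.eval ∧ φ'.NoUseless ∧
      φ'.FusesAboveUnions :=
  ⟨φ.normalize, FuseExpr.eval_normalize hwf, φ.noUseless_normalize, φ.fusesAboveUnions_normalize⟩
end

section
/- For every fuse-k-expression φ there exists a reduced glue-k-expression ξ whose value G^ξ is label-preservingly isomorphic to the value G^φ of φ. Here a glue-k-expression ξ is reduced if it contains no useless nodes and satisfies: (1) for every join subterm η_{i,j}(ψ) of ξ, the evaluated graph G^ψ contains no edge between a vertex of label i and a vertex of label j; (2) for every glue subterm ψ1 ⊔ ψ2 of ξ, the graphs G^{ψ1} and G^{ψ2} are edge-disjoint; (3) for every glue subterm ψ1 ⊔ ψ2 of ξ and every shared vertex v ∈ V(G^{ψ1}) ∩ V(G^{ψ2}), v has an incident edge in G^{ψ1} and an incident edge in G^{ψ2}. -/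
/-! ### Glue-`k`-expressions -/

/-- A `k`-labeled graph with titled vertices: vertices are natural-number titles
(titles determine vertex identity), together with a finite vertex set, a finite edge
set and a labeling (only meaningful on `verts`). -/
structure TGraph (k : ℕ) where
  verts : Finset ℕ
  edges : Finset (Sym2 ℕ)
  lab : ℕ → Fin k

/-- The underlying simple graph (on the vertex set) of a titled `k`-labeled graph. -/
def TGraph.toSG {k : ℕ} (T : TGraph k) : SimpleGraph {v // v ∈ T.verts} where
  Adj u v := u ≠ v ∧ s(u.1, v.1) ∈ T.edges
  symm := by
    constructor
    intro u v h
    refine ⟨h.1.symm, ?_⟩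
    rw [Sym2.eq_swap]
    exact h.2
  loopless := ⟨fun v h => h.1 rfl⟩

/-- Two titled `k`-labeled graphs are glueable: every shared vertex has the same label
in both graphs and is the unique vertex of its label in each of them. -/
def Glueable {k : ℕ} (T1 T2 : TGraph k) : Prop :=
  ∀ v ∈ T1.verts ∩ T2.verts,
    T1.lab v = T2.lab v ∧
    (∀ w ∈ T1.verts, T1.lab w = T1.lab v → w = v) ∧
    (∀ w ∈ T2.verts, T2.lab w = T2.lab v → w = v)

/-- A glue-`k`-expression: introduce a titled vertex, join, relabel, glue. -/
inductive GlueExpr (k : ℕ) where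
  | intro (v : ℕ) (i : Fin k)
  | join (i j : Fin k) (ξ : GlueExpr k)
  | relabel (i j : Fin k) (ξ : GlueExpr k)
  | glue (ξ1 ξ2 : GlueExpr k)

namespace GlueExpr

variable {k : ℕ}

/-- The titled `k`-labeled graph `G^ξ` obtained by evaluating a glue-`k`-expression. -/
def eval : GlueExpr k → TGraph k
  | .intro v i => ⟨{v}, ∅, fun _ => i⟩
  | .join i j ξ =>
      let T := ξ.eval
      ⟨T.verts,
       T.edges ∪
         (((T.verts ×ˢ T.verts).filter
            (fun p => p.1 ≠ p.2 ∧ T.lab p.1 = i ∧ T.lab p.2 = j)).image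
            (fun p => s(p.1, p.2))),
       T.lab⟩
  | .relabel i j ξ =>
      let T := ξ.eval
      ⟨T.verts, T.edges, fun v => if T.lab v = i then j else T.lab v⟩
  | .glue ξ1 ξ2 =>
      let T1 := ξ1.eval
      let T2 := ξ2.eval
      ⟨T1.verts ∪ T2.verts, T1.edges ∪ T2.edges,
       fun v => if v ∈ T1.verts then T1.lab v else T2.lab v⟩

/-- Well-formedness of a glue-`k`-expression: joins and relabels use two distinct
labels, and every glue node is applied to two glueable graphs. -/
def WF : GlueExpr k → Prop
  | .intro _ _ => True
  | .join i j ξ => i ≠ j ∧ ξ.WF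
  | .relabel i j ξ => i ≠ j ∧ ξ.WF
  | .glue ξ1 ξ2 => ξ1.WF ∧ ξ2.WF ∧ Glueable ξ1.eval ξ2.eval

/-- A glue-`k`-expression is *reduced* if it contains no useless nodes and moreover:
(1) no join `η_{i,j}` is applied to a graph already containing an edge between a
vertex of label `i` and a vertex of label `j`; (2) the two graphs at every glue node
are edge-disjoint; (3) every shared vertex at a glue node has an incident edge in both
glued graphs. -/
def Reduced : GlueExpr k → Prop
  | .intro _ _ => True
  | .join i j ξ => ξ.Reduced ∧
      -- the join is not useless: it creates at least one new edge
      (∃ u ∈ ξ.eval.verts, ∃ v ∈ ξ.eval.verts,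
        u ≠ v ∧ ξ.eval.lab u = i ∧ ξ.eval.lab v = j ∧ s(u, v) ∉ ξ.eval.edges) ∧
      -- property (1): no already existing edge between labels `i` and `j`
      (∀ u ∈ ξ.eval.verts, ∀ v ∈ ξ.eval.verts,
        ξ.eval.lab u = i → ξ.eval.lab v = j → s(u, v) ∉ ξ.eval.edges)
  | .relabel i _ ξ => ξ.Reduced ∧
      -- the relabel is not useless: some vertex has label `i`
      (∃ v ∈ ξ.eval.verts, ξ.eval.lab v = i)
  | .glue ξ1 ξ2 => ξ1.Reduced ∧ ξ2.Reduced ∧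
      -- property (2): the glued graphs are edge-disjoint
      ξ1.eval.edges ∩ ξ2.eval.edges = ∅ ∧
      -- property (3): every shared vertex has an incident edge on both sides
      (∀ v ∈ ξ1.eval.verts ∩ ξ2.eval.verts,
        (∃ e ∈ ξ1.eval.edges, v ∈ e) ∧ (∃ e ∈ ξ2.eval.edges, v ∈ e))

/-- The number of leaves (introduce nodes) of a glue-`k`-expression. -/
def leafCount : GlueExpr k → ℕ
  | .intro _ _ => 1
  | .join _ _ ξ => ξ.leafCount
  | .relabel _ _ ξ => ξ.leafCount
  | .glue ξ1 ξ2 => ξ1.leafCount + ξ2.leafCount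

/-- The number of nodes of the parse tree of a glue-`k`-expression. -/
def nodeCount : GlueExpr k → ℕ
  | .intro _ _ => 1
  | .join _ _ ξ => ξ.nodeCount + 1
  | .relabel _ _ ξ => ξ.nodeCount + 1
  | .glue ξ1 ξ2 => ξ1.nodeCount + ξ2.nodeCount + 1

end GlueExpr

/-- A titled `k`-labeled graph is label-preservingly isomorphic to a `k`-labeled graph. -/
def TGraph.LIsoTo {k : ℕ} (T : TGraph k) (H : LGraph k) : Prop :=
  ∃ e : T.toSG ≃g H.G, ∀ v, H.lab (e v) = T.lab v.1

/-!
Evaluate `φ` bottom-up, naming every vertex of a subterm `ψ` by its *title* `t v`: the vertex of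
`G^φ` it finally becomes. Fusions only identify titles, and since fusions act on whole label
classes, a vertex whose title is shared (with another vertex of `ψ`, or with a vertex outside `ψ`,
listed in `X`) has its whole label class collapsed onto that title. For every subterm one builds a
reduced glue-expression for the edges of `G^ψ` between distinct titles that no later join
re-creates (the set `F`, closed under exchanging endpoints for vertices of the same label), on
exactly their endpoints. A join is kept only if it creates such an edge; its two label classes
then carry disjoint sets of titles, which labels of the expression built so far single out. A
disjoint union becomes a glue: the collapse property makes every shared vertex the only one of
its label on either side, so relabelling one side aligns the labels, and counting the edges of the
right operand as re-created for the left one makes the glue edge-disjoint. The isolated vertices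
are glued on at the end.
-/

open Function

namespace FuseExpr

variable {k : ℕ}

instance finite_eval (φ : FuseExpr k) : Finite φ.eval.V := by
  induction φ with
  | intro i => exact inferInstanceAs (Finite PUnit)
  | union φ1 φ2 ih1 ih2 => exact inferInstanceAs (Finite (φ1.eval.V ⊕ φ2.eval.V))
  | join _ _ _ ih | relabel _ _ _ ih => exact ih
  | fuse i φ ih => exact inferInstanceAs (Finite (Option {v : φ.eval.V // φ.eval.lab v ≠ i}))

instance nonempty_eval : ∀ φ : FuseExpr k, Nonempty φ.eval.V
  | .intro _ => ⟨PUnit.unit⟩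
  | .union φ1 _ => ⟨Sum.inl (nonempty_eval φ1).some⟩
  | .join _ _ φ | .relabel _ _ φ => nonempty_eval φ
  | .fuse _ _ => ⟨none⟩

end FuseExpr

namespace TGraph

variable {k : ℕ}

def SharedLabelsUnique (T₁ T₂ : TGraph k) : Prop :=
  ∀ a ∈ T₁.verts, a ∈ T₂.verts → ∀ c, (c = T₁.lab a ∨ c = T₂.lab a) →
    (∀ w ∈ T₁.verts, T₁.lab w = c → w = a) ∧ ∀ w ∈ T₂.verts, T₂.lab w = c → w = a

theorem SharedLabelsUnique.glueable {T₁ T₁' T₂ : TGraph k}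
    (huniq : T₁.SharedLabelsUnique T₂) (hv : T₁'.verts = T₁.verts)
    (hlab : ∀ a ∈ T₁.verts, T₁'.lab a = if a ∈ T₂.verts then T₂.lab a else T₁.lab a) :
    Glueable T₁' T₂ := by
  intro v hv'
  rw [Finset.mem_inter, hv] at hv'
  have hlv : T₁'.lab v = T₂.lab v := by rw [hlab v hv'.1, if_pos hv'.2]
  obtain ⟨h₁, h₂⟩ := huniq v hv'.1 hv'.2 _ (Or.inr rfl)
  refine ⟨hlv, fun w hw hwv => ?_, h₂⟩
  rw [hv] at hw
  rw [hlab w hw, hlv] at hwv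
  split_ifs at hwv with hwT
  · exact h₂ w hwT hwv
  · exact h₁ w hw hwv

theorem LIsoTo.of_embedding {T : TGraph k} {H : LGraph k} {emb : H.V → ℕ}
    (hemb : Injective emb) (hv : ∀ a, a ∈ T.verts ↔ a ∈ Set.range emb)
    (he : ∀ u v, s(emb u, emb v) ∈ T.edges ↔ H.G.Adj u v) (hl : ∀ v, T.lab (emb v) = H.lab v) :
    T.LIsoTo H := by
  let f : H.V ≃ {a // a ∈ T.verts} := Equiv.ofBijective (fun v => ⟨emb v, (hv _).2 ⟨v, rfl⟩⟩)
    ⟨fun u v h => hemb (congrArg Subtype.val h), fun ⟨a, ha⟩ =>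
      let ⟨v, hv⟩ := (hv a).1 ha; ⟨v, Subtype.ext hv⟩⟩
  let e : H.G ≃g T.toSG := ⟨f, fun {u v} =>
    ⟨fun h => (he u v).1 h.2, fun h => ⟨fun huv => h.ne (f.injective huv), (he u v).2 h⟩⟩⟩
  refine ⟨e.symm, fun a => ?_⟩
  obtain ⟨v, rfl⟩ := e.surjective a
  rw [e.symm_apply_apply]
  exact (hl v).symm

end TGraph

namespace LGraph

variable {k : ℕ} {H : LGraph k} {i j : Fin k}

section Titling

variable (H) (t : H.V → ℕ)

def projEdges : Set (Sym2 ℕ) :=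
  {e | ∃ u v, H.G.Adj u v ∧ t u ≠ t v ∧ s(t u, t v) = e}

def joinEdges (i j : Fin k) : Set (Sym2 ℕ) :=
  {e | ∃ u v, H.lab u = i ∧ H.lab v = j ∧ t u ≠ t v ∧ s(t u, t v) = e}

def ClassCollapse (X : Set ℕ) : Prop :=
  ∀ v w, ((∃ v', v' ≠ v ∧ t v' = t v) ∨ t v ∈ X) → H.lab w = H.lab v → t w = t v

def LabelClosed (F : Set (Sym2 ℕ)) : Prop :=
  ∀ u v u' v', H.lab u' = H.lab u → H.lab v' = H.lab v → t u' ≠ t v' →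
    s(t u, t v) ∈ F → s(t u', t v') ∈ F

end Titling

variable {t : H.V → ℕ} {X : Set ℕ} {F : Set (Sym2 ℕ)}

theorem mem_projEdges_of_injective (ht : Injective t) {u v : H.V} :
    s(t u, t v) ∈ H.projEdges t ↔ H.G.Adj u v := by
  constructor
  · rintro ⟨u', v', hadj, -, he⟩
    rcases Sym2.eq_iff.mp he with ⟨hu, hv⟩ | ⟨hu, hv⟩
    · rwa [← ht hu, ← ht hv]
    · rw [← ht hu, ← ht hv]
      exact hadj.symm
  · intro hadj
    exact ⟨u, v, hadj, ht.ne hadj.ne, rfl⟩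

theorem classCollapse_of_injective (ht : Injective t) : H.ClassCollapse t ∅ := by
  rintro v w (⟨v', hne, hv⟩ | hX)
  · exact absurd (ht hv) hne
  · exact absurd hX (Set.notMem_empty _)

theorem labelClosed_empty : H.LabelClosed t ∅ :=
  fun _ _ _ _ _ _ _ h => h

theorem ClassCollapse.eq_of_two_preimages (hC : H.ClassCollapse t X) {z₁ z₂ z w : H.V}
    (hne : z₁ ≠ z₂) (h₁ : t z₁ = t z) (h₂ : t z₂ = t z) (hw : H.lab w = H.lab z) :
    t w = t z := by
  refine hC z w (Or.inl ?_) hw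
  by_cases hz : z₁ = z
  · exact ⟨z₂, fun h => hne (hz.trans h.symm), h₂⟩
  · exact ⟨z₁, hz, h₁⟩

theorem ClassCollapse.eq_of_lab_eq (hC : H.ClassCollapse t X) {T : TGraph k}
    (hT : ∀ a ∈ T.verts, ∃ u, t u = a ∧ H.lab u = T.lab a) {z₁ z₂ z : H.V} (hne : z₁ ≠ z₂)
    (h₁ : t z₁ = t z) (h₂ : t z₂ = t z) {w : ℕ} (hw : w ∈ T.verts) (hwz : T.lab w = H.lab z) :
    w = t z := by
  obtain ⟨u, rfl, hu⟩ := hT w hw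
  exact hC.eq_of_two_preimages hne h₁ h₂ (hu.trans hwz)

theorem ClassCollapse.sharedLabelsUnique (hC : H.ClassCollapse t X) {T₁ T₂ : TGraph k}
    (hT₁ : ∀ a ∈ T₁.verts, ∃ u, t u = a ∧ H.lab u = T₁.lab a)
    (hT₂ : ∀ a ∈ T₂.verts, ∃ u, t u = a ∧ H.lab u = T₂.lab a)
    (hdist : ∀ a ∈ T₁.verts, a ∈ T₂.verts → ∃ u₁ u₂, u₁ ≠ u₂ ∧ t u₁ = a ∧ t u₂ = a) :
    T₁.SharedLabelsUnique T₂ := by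
  intro a ha₁ ha₂ c hc
  obtain ⟨u₁, u₂, hne, hu₁, hu₂⟩ := hdist a ha₁ ha₂
  obtain ⟨z, rfl, hz⟩ : ∃ z, t z = a ∧ H.lab z = c := by
    rcases hc with rfl | rfl
    · exact hT₁ a ha₁
    · exact hT₂ a ha₂
  exact ⟨fun w hw hwc => hC.eq_of_lab_eq hT₁ hne hu₁ hu₂ hw (hwc.trans hz.symm),
    fun w hw hwc => hC.eq_of_lab_eq hT₂ hne hu₁ hu₂ hw (hwc.trans hz.symm)⟩

theorem ClassCollapse.exists_lab_iff (hC : H.ClassCollapse t X) {T : TGraph k}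
    (hT : ∀ a ∈ T.verts, ∃ u, t u = a ∧ H.lab u = T.lab a) (c : Fin k) :
    ∃ x, (∀ b ∈ T.verts, T.lab b = x ↔ b ∈ t '' {v | H.lab v = c}) ∧
      (x = c ∨ t '' {v | H.lab v = c} ⊆ T.verts) := by
  by_cases hmix : ∃ a ∈ T.verts, a ∈ t '' {v | H.lab v = c} ∧ T.lab a ≠ c
  · obtain ⟨_, ha, ⟨p, hp, rfl⟩, hpc⟩ := hmix
    obtain ⟨u, hu, hlu⟩ := hT _ ha
    have hpu : p ≠ u := by
      rintro rfl
      exact hpc (hlu.symm.trans hp)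
    have hclass : t '' {v | H.lab v = c} = {t p} := by
      refine Set.eq_singleton_iff_unique_mem.mpr ⟨⟨p, hp, rfl⟩, ?_⟩
      rintro _ ⟨v, hv, rfl⟩
      exact hC.eq_of_two_preimages hpu rfl hu (hv.trans hp.symm)
    refine ⟨T.lab (t p), fun b hb => ?_,
      Or.inr (by rw [hclass]; exact Set.singleton_subset_iff.mpr ha)⟩
    rw [hclass, Set.mem_singleton_iff]
    constructor
    · intro hb'
      exact (hC.eq_of_lab_eq hT hpu hu.symm rfl hb (hb'.trans hlu.symm)).trans hu
    · rintro rfl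
      rfl
  · push Not at hmix
    refine ⟨c, fun b hb => ⟨fun hbc => ?_, hmix b hb⟩, Or.inl rfl⟩
    obtain ⟨u, rfl, hu⟩ := hT b hb
    exact ⟨u, hu.trans hbc, rfl⟩

theorem ClassCollapse.disjoint_image_lab (hC : H.ClassCollapse t X) (hij : i ≠ j) {p q : H.V}
    (hp : H.lab p = i) (hq : H.lab q = j) (hpq : t p ≠ t q) :
    Disjoint (t '' {v | H.lab v = i}) (t '' {v | H.lab v = j}) := by
  refine Set.disjoint_left.mpr ?_
  rintro _ ⟨u, hu, rfl⟩ ⟨v, hv, huv⟩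
  have hne : v ≠ u := by
    rintro rfl
    exact hij (hu.symm.trans hv)
  have h1 := hC.eq_of_two_preimages hne huv rfl (hp.trans hu.symm)
  have h2 := hC.eq_of_two_preimages hne rfl huv.symm (hq.trans hv.symm)
  exact hpq (by rw [h1, h2, huv])

theorem ClassCollapse.mem_joinEdges_iff (hC : H.ClassCollapse t X) (hij : i ≠ j) {p q : H.V}
    (hp : H.lab p = i) (hq : H.lab q = j) (hpq : t p ≠ t q) {e : Sym2 ℕ} :
    e ∈ H.joinEdges t i j ↔
      ∃ a ∈ t '' {v | H.lab v = i}, ∃ b ∈ t '' {v | H.lab v = j}, s(a, b) = e := by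
  constructor
  · rintro ⟨u, v, hu, hv, -, rfl⟩
    exact ⟨_, ⟨u, hu, rfl⟩, _, ⟨v, hv, rfl⟩, rfl⟩
  · rintro ⟨_, ⟨u, hu, rfl⟩, _, ⟨v, hv, rfl⟩, rfl⟩
    exact ⟨u, v, hu, hv, (hC.disjoint_image_lab hij hp hq hpq).ne_of_mem ⟨u, hu, rfl⟩
      ⟨v, hv, rfl⟩, rfl⟩

variable (i H) in
def fuseProj (v : H.V) : (H.fuse i).V :=
  if h : H.lab v = i then none else some ⟨v, h⟩

theorem fuseProj_of_lab_eq {v : H.V} (h : H.lab v = i) : H.fuseProj i v = none := dif_pos h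

theorem fuseProj_of_lab_ne {v : H.V} (h : H.lab v ≠ i) : H.fuseProj i v = some ⟨v, h⟩ :=
  dif_neg h

theorem lab_fuseProj (v : H.V) : (H.fuse i).lab (H.fuseProj i v) = H.lab v := by
  by_cases h : H.lab v = i
  · rw [fuseProj_of_lab_eq h]
    exact h.symm
  · rw [fuseProj_of_lab_ne h]
    rfl

theorem eq_of_fuseProj_eq {v w : H.V} (hv : H.lab v ≠ i) (h : H.fuseProj i w = H.fuseProj i v) :
    w = v := by
  rw [fuseProj_of_lab_ne hv] at h
  by_cases hw : H.lab w = i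
  · rw [fuseProj_of_lab_eq hw] at h
    exact absurd h (Option.some_ne_none _).symm
  · rw [fuseProj_of_lab_ne hw] at h
    exact congrArg Subtype.val (Option.some_injective _ h)

theorem fuse_adj_fuseProj {u v : H.V} (huv : H.G.Adj u v)
    (hne : H.fuseProj i u ≠ H.fuseProj i v) :
    (H.fuse i).G.Adj (H.fuseProj i u) (H.fuseProj i v) := by
  by_cases hu : H.lab u = i <;> by_cases hv : H.lab v = i
  · exact absurd (by rw [fuseProj_of_lab_eq hu, fuseProj_of_lab_eq hv]) hne
  · rw [fuseProj_of_lab_eq hu, fuseProj_of_lab_ne hv]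
    exact ⟨u, hu, huv⟩
  · rw [fuseProj_of_lab_ne hu, fuseProj_of_lab_eq hv]
    exact ⟨v, hv, huv⟩
  · rw [fuseProj_of_lab_ne hu, fuseProj_of_lab_ne hv]
    exact huv

theorem exists_adj_of_fuse_adj {x y : (H.fuse i).V} (h : (H.fuse i).G.Adj x y) :
    ∃ u v, H.G.Adj u v ∧ H.fuseProj i u = x ∧ H.fuseProj i v = y :=
  match x, y, h with
  | some u, some v, h => ⟨u, v, h, fuseProj_of_lab_ne u.2, fuseProj_of_lab_ne v.2⟩
  | some u, none, ⟨w, hw, h⟩ => ⟨u, w, h, fuseProj_of_lab_ne u.2, fuseProj_of_lab_eq hw⟩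
  | none, some v, ⟨w, hw, h⟩ => ⟨w, v, h, fuseProj_of_lab_eq hw, fuseProj_of_lab_ne v.2⟩

theorem projEdges_fuse (t : (H.fuse i).V → ℕ) :
    (H.fuse i).projEdges t = H.projEdges (t ∘ H.fuseProj i) := by
  ext e
  constructor
  · rintro ⟨x, y, hxy, hne, rfl⟩
    obtain ⟨u, v, huv, rfl, rfl⟩ := exists_adj_of_fuse_adj hxy
    exact ⟨u, v, huv, hne, rfl⟩
  · rintro ⟨u, v, huv, hne, rfl⟩
    exact ⟨_, _, fuse_adj_fuseProj huv fun h => hne (congrArg t h), hne, rfl⟩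

theorem projEdges_union {H₁ H₂ : LGraph k} (t : (H₁.union H₂).V → ℕ) :
    (H₁.union H₂).projEdges t = H₁.projEdges (t ∘ Sum.inl) ∪ H₂.projEdges (t ∘ Sum.inr) := by
  ext e
  constructor
  · rintro ⟨u | u, v | v, huv, hne, rfl⟩
    · exact Or.inl ⟨u, v, huv, hne, rfl⟩
    · exact absurd huv (SimpleGraph.not_adj_sum_inl_inr _ _)
    · exact absurd huv.symm (SimpleGraph.not_adj_sum_inl_inr _ _)
    · exact Or.inr ⟨u, v, huv, hne, rfl⟩
  · rintro (⟨u, v, huv, hne, rfl⟩ | ⟨u, v, huv, hne, rfl⟩)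
    · exact ⟨.inl u, .inl v, huv, hne, rfl⟩
    · exact ⟨.inr u, .inr v, huv, hne, rfl⟩

theorem projEdges_join (t : H.V → ℕ) :
    (H.join i j).projEdges t = H.projEdges t ∪ H.joinEdges t i j := by
  ext e
  constructor
  · rintro ⟨u, v, huv | ⟨-, ⟨hu, hv⟩ | ⟨hu, hv⟩⟩, hne, rfl⟩
    · exact Or.inl ⟨u, v, huv, hne, rfl⟩
    · exact Or.inr ⟨u, v, hu, hv, hne, rfl⟩
    · exact Or.inr ⟨v, u, hv, hu, hne.symm, Sym2.eq_swap⟩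
  · rintro (⟨u, v, huv, hne, rfl⟩ | ⟨u, v, hu, hv, hne, rfl⟩)
    · exact ⟨u, v, Or.inl huv, hne, rfl⟩
    · exact ⟨u, v, Or.inr ⟨fun h => hne (congrArg t h), Or.inl ⟨hu, hv⟩⟩, hne, rfl⟩

theorem ClassCollapse.of_relabel (h : (H.relabel i j).ClassCollapse t X) : H.ClassCollapse t X :=
  fun v w hv hw => h v w hv (congrArg (fun c => if c = i then j else c) hw)

theorem LabelClosed.of_relabel (h : (H.relabel i j).LabelClosed t F) : H.LabelClosed t F :=
  fun u v u' v' hu hv =>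
    h u v u' v' (congrArg (fun c => if c = i then j else c) hu)
      (congrArg (fun c => if c = i then j else c) hv)

theorem ClassCollapse.of_fuse {t : (H.fuse i).V → ℕ} (h : (H.fuse i).ClassCollapse t X) :
    H.ClassCollapse (t ∘ H.fuseProj i) X := by
  intro v w hv hw
  by_cases hvi : H.lab v = i
  · simp only [comp_apply, fuseProj_of_lab_eq hvi, fuseProj_of_lab_eq (hw.trans hvi)]
  · refine h _ _ ?_ (by rw [lab_fuseProj, lab_fuseProj, hw])
    rcases hv with ⟨v', hne, hv'⟩ | hX
    · exact Or.inl ⟨_, fun h' => hne (eq_of_fuseProj_eq hvi h'), hv'⟩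
    · exact Or.inr hX

theorem LabelClosed.of_fuse {t : (H.fuse i).V → ℕ} (h : (H.fuse i).LabelClosed t F) :
    H.LabelClosed (t ∘ H.fuseProj i) F :=
  fun u v u' v' hu hv =>
    h _ _ _ _ (by rw [lab_fuseProj, lab_fuseProj, hu]) (by rw [lab_fuseProj, lab_fuseProj, hv])

section Union

variable {H₁ H₂ : LGraph k} {t : (H₁.union H₂).V → ℕ}

theorem ClassCollapse.union_left (h : (H₁.union H₂).ClassCollapse t X) :
    H₁.ClassCollapse (t ∘ Sum.inl) (X ∪ Set.range (t ∘ Sum.inr)) := by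
  rintro v w (⟨v', hne, hv⟩ | hX | ⟨v', hv⟩) hw
  · exact h (.inl v) (.inl w) (Or.inl ⟨.inl v', fun h' => hne (Sum.inl_injective h'), hv⟩) hw
  · exact h (.inl v) (.inl w) (Or.inr hX) hw
  · exact h (.inl v) (.inl w) (Or.inl ⟨.inr v', Sum.inr_ne_inl, hv⟩) hw

theorem ClassCollapse.union_right (h : (H₁.union H₂).ClassCollapse t X) :
    H₂.ClassCollapse (t ∘ Sum.inr) (X ∪ Set.range (t ∘ Sum.inl)) := by
  rintro v w (⟨v', hne, hv⟩ | hX | ⟨v', hv⟩) hw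
  · exact h (.inr v) (.inr w) (Or.inl ⟨.inr v', fun h' => hne (Sum.inr_injective h'), hv⟩) hw
  · exact h (.inr v) (.inr w) (Or.inr hX) hw
  · exact h (.inr v) (.inr w) (Or.inl ⟨.inl v', Sum.inl_ne_inr, hv⟩) hw

/-- Edges of the right operand can only be re-created on the left through titles shared with
the right operand, whose label classes have collapsed. -/
theorem LabelClosed.union_left (hC : (H₁.union H₂).ClassCollapse t X)
    (h : (H₁.union H₂).LabelClosed t F) :
    H₁.LabelClosed (t ∘ Sum.inl) (F ∪ H₂.projEdges (t ∘ Sum.inr)) := by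
  have collapse : ∀ {u u' : H₁.V} {p q : H₂.V},
      t (.inl u) ∈ s(t (.inr p), t (.inr q)) → H₁.lab u' = H₁.lab u →
        t (.inl u') = t (.inl u) := by
    intro u u' p q hm hu
    rcases Sym2.mem_iff.mp hm with hr | hr
    · exact hC _ _ (Or.inl ⟨.inr p, Sum.inr_ne_inl, hr.symm⟩) hu
    · exact hC _ _ (Or.inl ⟨.inr q, Sum.inr_ne_inl, hr.symm⟩) hu
  rintro u v u' v' hu hv hne (hF | ⟨p, q, hpq, hne', he⟩)
  · exact Or.inl (h (.inl u) (.inl v) _ _ hu hv hne hF)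
  · have he' : s(t (.inr p), t (.inr q)) = s(t (.inl u), t (.inl v)) := he
    have hu' := collapse (he'.symm ▸ Sym2.mem_mk_left _ _) hu
    have hv' := collapse (he'.symm ▸ Sym2.mem_mk_right _ _) hv
    refine Or.inr ⟨p, q, hpq, hne', ?_⟩
    change s(t (.inr p), t (.inr q)) = s(t (.inl u'), t (.inl v'))
    rw [hu', hv', he']

theorem LabelClosed.union_right (h : (H₁.union H₂).LabelClosed t F) :
    H₂.LabelClosed (t ∘ Sum.inr) F :=
  fun u v u' v' hu hv => h (.inr u) (.inr v) (.inr u') (.inr v') hu hv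

end Union

theorem ClassCollapse.exists_lab_title_eq (hC : H.ClassCollapse t X) {p u u' : H.V}
    (hpu : t p = t u) (hu : H.lab u' = H.lab u) : ∃ p', H.lab p' = H.lab p ∧ t p' = t u' := by
  by_cases hlab : H.lab u = H.lab p
  · exact ⟨u', hu.trans hlab, rfl⟩
  · have hne : p ≠ u := by
      rintro rfl
      exact hlab rfl
    exact ⟨p, rfl, by rw [hC u u' (Or.inl ⟨p, hne, hpu⟩) hu, hpu]⟩

/-- A title shared by two vertices collapses both of their label classes. -/
theorem LabelClosed.join (hC : H.ClassCollapse t X) (h : H.LabelClosed t F) :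
    H.LabelClosed t (F ∪ H.joinEdges t i j) := by
  rintro u v u' v' hu hv hne (hF | ⟨p, q, hp, hq, -, he⟩)
  · exact Or.inl (h _ _ _ _ hu hv hne hF)
  · right
    rcases Sym2.eq_iff.mp he with ⟨hpu, hqv⟩ | ⟨hpv, hqu⟩
    · obtain ⟨p', hp', hpt⟩ := hC.exists_lab_title_eq hpu hu
      obtain ⟨q', hq', hqt⟩ := hC.exists_lab_title_eq hqv hv
      exact ⟨p', q', hp'.trans hp, hq'.trans hq, by rwa [hpt, hqt], by rw [hpt, hqt]⟩
    · obtain ⟨q', hq', hqt⟩ := hC.exists_lab_title_eq hqu hu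
      obtain ⟨p', hp', hpt⟩ := hC.exists_lab_title_eq hpv hv
      exact ⟨p', q', hp'.trans hp, hq'.trans hq, by rw [hpt, hqt]; exact hne.symm,
        by rw [hpt, hqt, Sym2.eq_swap]⟩

end LGraph

namespace GlueExpr

variable {k : ℕ}

theorem mem_eval_join_edges {x y : Fin k} {ξ : GlueExpr k} {e : Sym2 ℕ} :
    e ∈ (join x y ξ).eval.edges ↔ e ∈ ξ.eval.edges ∨
      ∃ a ∈ ξ.eval.verts, ∃ b ∈ ξ.eval.verts,
        a ≠ b ∧ ξ.eval.lab a = x ∧ ξ.eval.lab b = y ∧ s(a, b) = e := by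
  simp only [eval, Finset.mem_union, Finset.mem_image, Finset.mem_filter, Finset.mem_product,
    Prod.exists]
  aesop

theorem mem_eval_join_edges_of_labels {x y : Fin k} {ξ : GlueExpr k} {A B : Set ℕ}
    (hA : ∀ b ∈ ξ.eval.verts, ξ.eval.lab b = x ↔ b ∈ A)
    (hB : ∀ b ∈ ξ.eval.verts, ξ.eval.lab b = y ↔ b ∈ B) (hAv : A ⊆ ξ.eval.verts)
    (hBv : B ⊆ ξ.eval.verts) (hAB : Disjoint A B) {e : Sym2 ℕ} :
    e ∈ (join x y ξ).eval.edges ↔ e ∈ ξ.eval.edges ∨ ∃ a ∈ A, ∃ b ∈ B, s(a, b) = e := by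
  rw [mem_eval_join_edges]
  refine or_congr Iff.rfl ⟨?_, ?_⟩
  · rintro ⟨a, ha, b, hb, -, hax, hby, rfl⟩
    exact ⟨a, (hA a ha).1 hax, b, (hB b hb).1 hby, rfl⟩
  · rintro ⟨a, ha, b, hb, rfl⟩
    exact ⟨a, hAv ha, b, hBv hb, hAB.ne_of_mem ha hb, (hA a (hAv ha)).2 ha,
      (hB b (hBv hb)).2 hb, rfl⟩

def glueIntros (c : ℕ → Fin k) : List ℕ → GlueExpr k → GlueExpr k
  | [], ξ => ξ
  | a :: l, ξ => .glue (glueIntros c l ξ) (.intro a (c a))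

variable {c : ℕ → Fin k} {l : List ℕ} {ξ : GlueExpr k}

theorem eval_glueIntros_verts : (glueIntros c l ξ).eval.verts = ξ.eval.verts ∪ l.toFinset := by
  induction l with
  | nil => simp [glueIntros]
  | cons a l ih =>
    simp only [glueIntros, eval, ih, List.toFinset_cons]
    ext
    simp only [Finset.mem_union, Finset.mem_insert, Finset.mem_singleton]
    tauto

theorem eval_glueIntros_edges : (glueIntros c l ξ).eval.edges = ξ.eval.edges := by
  induction l with
  | nil => rfl
  | cons a l ih => simp only [glueIntros, eval, ih, Finset.union_empty]

theorem eval_glueIntros_lab_of_mem {a : ℕ} (ha : a ∈ ξ.eval.verts) :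
    (glueIntros c l ξ).eval.lab a = ξ.eval.lab a := by
  induction l with
  | nil => rfl
  | cons b l ih =>
    simp only [glueIntros, eval]
    rw [if_pos (by rw [eval_glueIntros_verts]; exact Finset.mem_union_left _ ha), ih]

theorem eval_glueIntros_lab_of_notMem {a : ℕ} (ha : a ∉ ξ.eval.verts) (hal : a ∈ l) :
    (glueIntros c l ξ).eval.lab a = c a := by
  induction l with
  | nil => exact absurd hal List.not_mem_nil
  | cons b l ih =>
    simp only [glueIntros, eval, eval_glueIntros_verts, Finset.mem_union, List.mem_toFinset]
    by_cases hl : a ∈ l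
    · rw [if_pos (Or.inr hl), ih hl]
    · rw [if_neg (by tauto), (List.mem_cons.mp hal).resolve_right hl]

theorem notMem_eval_glueIntros_verts {a : ℕ} (hfresh : ∀ b ∈ a :: l, b ∉ ξ.eval.verts)
    (hl : (a :: l).Nodup) : a ∉ (glueIntros c l ξ).eval.verts := by
  rw [eval_glueIntros_verts, Finset.mem_union, List.mem_toFinset, not_or]
  exact ⟨hfresh a List.mem_cons_self, (List.nodup_cons.mp hl).1⟩

theorem wf_glueIntros (hw : ξ.WF) (hfresh : ∀ a ∈ l, a ∉ ξ.eval.verts) (hl : l.Nodup) :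
    (glueIntros c l ξ).WF := by
  induction l with
  | nil => exact hw
  | cons a l ih =>
    have ha := notMem_eval_glueIntros_verts (c := c) hfresh hl
    refine ⟨ih (fun b hb => hfresh b (List.mem_cons_of_mem _ hb)) hl.of_cons, trivial, ?_⟩
    intro v hv
    simp only [eval, Finset.mem_inter, Finset.mem_singleton] at hv
    exact absurd (hv.2 ▸ hv.1) ha

theorem reduced_glueIntros (hr : ξ.Reduced) (hfresh : ∀ a ∈ l, a ∉ ξ.eval.verts)
    (hl : l.Nodup) : (glueIntros c l ξ).Reduced := by
  induction l with
  | nil => exact hr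
  | cons a l ih =>
    have ha := notMem_eval_glueIntros_verts (c := c) hfresh hl
    refine ⟨ih (fun b hb => hfresh b (List.mem_cons_of_mem _ hb)) hl.of_cons, trivial,
      Finset.inter_empty _, ?_⟩
    intro v hv
    simp only [eval, Finset.mem_inter, Finset.mem_singleton] at hv
    exact absurd (hv.2 ▸ hv.1) ha

theorem exists_extend_verts (hw : ξ.WF) (hr : ξ.Reduced) (S : Finset ℕ) (c : ℕ → Fin k) :
    ∃ ζ : GlueExpr k, ζ.WF ∧ ζ.Reduced ∧ ζ.eval.verts = ξ.eval.verts ∪ S ∧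
      ζ.eval.edges = ξ.eval.edges ∧ (∀ a ∈ ξ.eval.verts, ζ.eval.lab a = ξ.eval.lab a) ∧
      ∀ a ∈ S, a ∉ ξ.eval.verts → ζ.eval.lab a = c a := by
  classical
  have hfresh : ∀ a ∈ (S \ ξ.eval.verts).toList, a ∉ ξ.eval.verts := fun a ha =>
    (Finset.mem_sdiff.mp (Finset.mem_toList.mp ha)).2
  refine ⟨glueIntros c (S \ ξ.eval.verts).toList ξ, wf_glueIntros hw hfresh (Finset.nodup_toList _),
    reduced_glueIntros hr hfresh (Finset.nodup_toList _), ?_, eval_glueIntros_edges,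
    fun a ha => eval_glueIntros_lab_of_mem ha,
    fun a ha ha' => eval_glueIntros_lab_of_notMem ha' (by simp [ha, ha'])⟩
  rw [eval_glueIntros_verts, Finset.toList_toFinset, Finset.union_sdiff_self_eq_union]

theorem exists_join_completion (hw : ξ.WF) (hr : ξ.Reduced) {x y : Fin k} (hxy : x ≠ y)
    {A B : Set ℕ} (hfin : (A ∪ B).Finite) (hAB : Disjoint A B)
    (hA : ∀ b ∈ ξ.eval.verts, ξ.eval.lab b = x ↔ b ∈ A)
    (hB : ∀ b ∈ ξ.eval.verts, ξ.eval.lab b = y ↔ b ∈ B) {a₀ b₀ : ℕ} (ha₀ : a₀ ∈ A)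
    (hb₀ : b₀ ∈ B) (hnew : ∀ a ∈ A, ∀ b ∈ B, s(a, b) ∉ ξ.eval.edges) :
    ∃ ζ : GlueExpr k, ζ.WF ∧ ζ.Reduced ∧
      (∀ a, a ∈ ζ.eval.verts ↔ a ∈ ξ.eval.verts ∨ a ∈ A ∨ a ∈ B) ∧
      (∀ e, e ∈ ζ.eval.edges ↔ e ∈ ξ.eval.edges ∨ ∃ a ∈ A, ∃ b ∈ B, s(a, b) = e) ∧
      (∀ a ∈ ξ.eval.verts, ζ.eval.lab a = ξ.eval.lab a) ∧
      (∀ a ∈ A, a ∉ ξ.eval.verts → ζ.eval.lab a = x) ∧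
      ∀ b ∈ B, b ∉ ξ.eval.verts → ζ.eval.lab b = y := by
  classical
  obtain ⟨ζ, hw, hr, hv, he, hlab, hlab'⟩ :=
    exists_extend_verts hw hr hfin.toFinset fun a => if a ∈ A then x else y
  have hvζ : ∀ a, a ∈ ζ.eval.verts ↔ a ∈ ξ.eval.verts ∨ a ∈ A ∨ a ∈ B := fun a => by
    rw [hv, Finset.mem_union, Set.Finite.mem_toFinset, Set.mem_union]
  have hA' : ∀ a ∈ A, a ∉ ξ.eval.verts → ζ.eval.lab a = x := fun a ha ha' => by
    rw [hlab' a (hfin.mem_toFinset.2 (Or.inl ha)) ha', if_pos ha]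
  have hB' : ∀ b ∈ B, b ∉ ξ.eval.verts → ζ.eval.lab b = y := fun b hb hb' => by
    rw [hlab' b (hfin.mem_toFinset.2 (Or.inr hb)) hb', if_neg (hAB.notMem_of_mem_right hb)]
  have hζA : ∀ b ∈ ζ.eval.verts, ζ.eval.lab b = x ↔ b ∈ A := by
    intro b hb
    by_cases hbξ : b ∈ ξ.eval.verts
    · rw [hlab b hbξ]
      exact hA b hbξ
    rcases ((hvζ b).1 hb).resolve_left hbξ with hbA | hbB
    · exact iff_of_true (hA' b hbA hbξ) hbA
    · rw [hB' b hbB hbξ]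
      exact iff_of_false hxy.symm (hAB.notMem_of_mem_right hbB)
  have hζB : ∀ b ∈ ζ.eval.verts, ζ.eval.lab b = y ↔ b ∈ B := by
    intro b hb
    by_cases hbξ : b ∈ ξ.eval.verts
    · rw [hlab b hbξ]
      exact hB b hbξ
    rcases ((hvζ b).1 hb).resolve_left hbξ with hbA | hbB
    · rw [hA' b hbA hbξ]
      exact iff_of_false hxy (hAB.notMem_of_mem_left hbA)
    · exact iff_of_true (hB' b hbB hbξ) hbB
  have hAv : A ⊆ ζ.eval.verts := fun a ha => (hvζ a).2 (Or.inr (Or.inl ha))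
  have hBv : B ⊆ ζ.eval.verts := fun b hb => (hvζ b).2 (Or.inr (Or.inr hb))
  refine ⟨join x y ζ, ⟨hxy, hw⟩, ⟨hr, ?_, ?_⟩, hvζ, fun e => ?_, hlab, hA', hB'⟩
  · refine ⟨a₀, hAv ha₀, b₀, hBv hb₀, hAB.ne_of_mem ha₀ hb₀, (hζA _ (hAv ha₀)).2 ha₀,
      (hζB _ (hBv hb₀)).2 hb₀, ?_⟩
    rw [he]
    exact hnew _ ha₀ _ hb₀
  · intro u hu v hv hux hvy
    rw [he]
    exact hnew u ((hζA u hu).1 hux) v ((hζB v hv).1 hvy)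
  · rw [mem_eval_join_edges_of_labels hζA hζB hAv hBv hAB, he]

def relabelList : List (Fin k × Fin k) → GlueExpr k → GlueExpr k
  | [], ξ => ξ
  | p :: l, ξ => .relabel p.1 p.2 (relabelList l ξ)

def relabelFun : List (Fin k × Fin k) → Fin k → Fin k
  | [], c => c
  | p :: l, c => if relabelFun l c = p.1 then p.2 else relabelFun l c

variable {l : List (Fin k × Fin k)} {ξ : GlueExpr k}

theorem relabelFun_of_forall_ne {c : Fin k} (h : ∀ p ∈ l, p.1 ≠ c) : relabelFun l c = c := by
  induction l with
  | nil => rfl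
  | cons p l ih =>
    rw [relabelFun, ih fun q hq => h q (List.mem_cons_of_mem _ hq),
      if_neg (h p List.mem_cons_self).symm]

theorem relabelFun_of_mem {c d : Fin k} (hcd : (c, d) ∈ l) (hl : (l.map Prod.fst).Nodup)
    (hst : ∀ p ∈ l, ∀ q ∈ l, p.2 ≠ q.1) : relabelFun l c = d := by
  induction l with
  | nil => exact absurd hcd List.not_mem_nil
  | cons p l ih =>
    have hst' : ∀ p ∈ l, ∀ q ∈ l, p.2 ≠ q.1 := fun p hp q hq =>
      hst p (List.mem_cons_of_mem _ hp) q (List.mem_cons_of_mem _ hq)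
    rw [List.map_cons, List.nodup_cons] at hl
    rcases List.mem_cons.mp hcd with rfl | hcd
    · rw [relabelFun, relabelFun_of_forall_ne fun q hq hqc => hl.1
        (List.mem_map.mpr ⟨q, hq, hqc⟩), if_pos rfl]
    · rw [relabelFun, ih hcd hl.2 hst', if_neg (hst _ (List.mem_cons_of_mem _ hcd) p
        List.mem_cons_self)]

theorem eval_relabelList_verts : (relabelList l ξ).eval.verts = ξ.eval.verts := by
  induction l with
  | nil => rfl
  | cons p l ih => exact ih

theorem eval_relabelList_edges : (relabelList l ξ).eval.edges = ξ.eval.edges := by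
  induction l with
  | nil => rfl
  | cons p l ih => exact ih

theorem eval_relabelList_lab (a : ℕ) :
    (relabelList l ξ).eval.lab a = relabelFun l (ξ.eval.lab a) := by
  induction l with
  | nil => rfl
  | cons p l ih =>
    change (if (relabelList l ξ).eval.lab a = p.1 then p.2 else _) = _
    rw [ih]
    rfl

theorem wf_relabelList (hw : ξ.WF) (hl : ∀ p ∈ l, p.1 ≠ p.2) : (relabelList l ξ).WF := by
  induction l with
  | nil => exact hw
  | cons p l ih =>
    exact ⟨hl p List.mem_cons_self, ih fun q hq => hl q (List.mem_cons_of_mem _ hq)⟩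

theorem reduced_relabelList (hr : ξ.Reduced) (hl : (l.map Prod.fst).Nodup)
    (hst : ∀ p ∈ l, ∀ q ∈ l, p.2 ≠ q.1)
    (hsrc : ∀ p ∈ l, ∃ a ∈ ξ.eval.verts, ξ.eval.lab a = p.1) : (relabelList l ξ).Reduced := by
  induction l with
  | nil => exact hr
  | cons p l ih =>
    rw [List.map_cons, List.nodup_cons] at hl
    obtain ⟨a, ha, hap⟩ := hsrc p List.mem_cons_self
    refine ⟨ih hl.2 (fun p hp q hq => hst p (List.mem_cons_of_mem _ hp) q
      (List.mem_cons_of_mem _ hq)) fun q hq => hsrc q (List.mem_cons_of_mem _ hq),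
      a, by rwa [eval_relabelList_verts], ?_⟩
    rw [eval_relabelList_lab, hap]
    exact relabelFun_of_forall_ne fun q hq hqp => hl.1 (hqp ▸ List.mem_map_of_mem hq)

/-- The relabels `c → d` used have pairwise distinct sources and no target is a source, so
their order does not matter. -/
theorem exists_relabel_aligned (hw : ξ.WF) (hr : ξ.Reduced) {T : TGraph k}
    (huniq : ξ.eval.SharedLabelsUnique T) :
    ∃ ξ' : GlueExpr k, ξ'.WF ∧ ξ'.Reduced ∧ ξ'.eval.verts = ξ.eval.verts ∧
      ξ'.eval.edges = ξ.eval.edges ∧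
      ∀ a ∈ ξ.eval.verts, ξ'.eval.lab a = if a ∈ T.verts then T.lab a else ξ.eval.lab a := by
  classical
  set S := (ξ.eval.verts ∩ T.verts).filter fun a => ξ.eval.lab a ≠ T.lab a
  have hS : ∀ {a}, a ∈ S ↔ a ∈ ξ.eval.verts ∧ a ∈ T.verts ∧ ξ.eval.lab a ≠ T.lab a := by
    simp [S, and_assoc]
  set l := S.toList.map fun a => (ξ.eval.lab a, T.lab a)
  have hl : ∀ {p}, p ∈ l ↔ ∃ a ∈ S, (ξ.eval.lab a, T.lab a) = p := by simp [l]
  have hsrc_inj : ∀ a ∈ S, ∀ b ∈ ξ.eval.verts, ξ.eval.lab b = ξ.eval.lab a → b = a :=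
    fun a ha b hb hab => (huniq a (hS.1 ha).1 (hS.1 ha).2.1 _ (Or.inl rfl)).1 b hb hab
  have htgt : ∀ a ∈ S, ∀ b ∈ ξ.eval.verts, ξ.eval.lab b = T.lab a → b = a :=
    fun a ha b hb hab => (huniq a (hS.1 ha).1 (hS.1 ha).2.1 _ (Or.inr rfl)).1 b hb hab
  have hnd : (l.map Prod.fst).Nodup := by
    simp only [l, List.map_map]
    exact (Finset.nodup_toList S).map_on fun a ha b hb hab =>
      (hsrc_inj a (Finset.mem_toList.mp ha) b (hS.1 (Finset.mem_toList.mp hb)).1 hab.symm).symm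
  have hst : ∀ p ∈ l, ∀ q ∈ l, p.2 ≠ q.1 := by
    rintro _ hp _ hq hpq
    obtain ⟨a, ha, rfl⟩ := hl.1 hp
    obtain ⟨b, hb, rfl⟩ := hl.1 hq
    obtain rfl := htgt a ha b (hS.1 hb).1 hpq.symm
    exact (hS.1 ha).2.2 hpq.symm
  refine ⟨relabelList l ξ, wf_relabelList hw ?_, reduced_relabelList hr hnd hst ?_,
    eval_relabelList_verts, eval_relabelList_edges, fun a ha => ?_⟩
  · rintro _ hp
    obtain ⟨a, ha, rfl⟩ := hl.1 hp
    exact (hS.1 ha).2.2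
  · rintro _ hp
    obtain ⟨a, ha, rfl⟩ := hl.1 hp
    exact ⟨a, (hS.1 ha).1, rfl⟩
  rw [eval_relabelList_lab]
  by_cases haS : a ∈ S
  · rw [if_pos (hS.1 haS).2.1]
    exact relabelFun_of_mem (hl.2 ⟨a, haS, rfl⟩) hnd hst
  · rw [relabelFun_of_forall_ne]
    · split_ifs with haT
      · by_contra hne
        exact haS (hS.2 ⟨ha, haT, hne⟩)
      · rfl
    rintro _ hp hpa
    obtain ⟨b, hb, rfl⟩ := hl.1 hp
    exact haS (hsrc_inj b hb a ha hpa.symm ▸ hb)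

structure Represents (ξ : GlueExpr k) (H : LGraph k) (t : H.V → ℕ) (F : Set (Sym2 ℕ)) :
    Prop where
  wf : ξ.WF
  reduced : ξ.Reduced
  mem_edges : ∀ e, e ∈ ξ.eval.edges ↔ e ∈ H.projEdges t \ F
  lab_eq : ∀ a ∈ ξ.eval.verts, ∃ u, t u = a ∧ H.lab u = ξ.eval.lab a

structure Realizes (ξ : GlueExpr k) (H : LGraph k) (t : H.V → ℕ) (F : Set (Sym2 ℕ)) : Prop
    extends ξ.Represents H t F where
  exists_edge : ∀ a ∈ ξ.eval.verts, ∃ e ∈ ξ.eval.edges, a ∈ e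

theorem Realizes.transfer {ξ : GlueExpr k} {H H' : LGraph k} {t : H.V → ℕ} {t' : H'.V → ℕ}
    {F F' : Set (Sym2 ℕ)} (h : ξ.Realizes H t F) (hE : H'.projEdges t' \ F' = H.projEdges t \ F)
    (f : H.V → H'.V) (ht : ∀ u, t' (f u) = t u) (hl : ∀ u, H'.lab (f u) = H.lab u) :
    ξ.Realizes H' t' F' where
  wf := h.wf
  reduced := h.reduced
  mem_edges e := by rw [hE]; exact h.mem_edges e
  lab_eq a ha := by
    obtain ⟨u, rfl, hu⟩ := h.lab_eq a ha
    exact ⟨f u, ht u, (hl u).trans hu⟩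
  exists_edge := h.exists_edge

end GlueExpr

namespace LGraph

variable {k : ℕ}

def Realizable (H : LGraph k) (t : H.V → ℕ) (F : Set (Sym2 ℕ)) : Prop :=
  H.projEdges t \ F = ∅ ∨ ∃ ξ : GlueExpr k, ξ.Realizes H t F

variable {H : LGraph k} {t : H.V → ℕ} {F : Set (Sym2 ℕ)}

theorem Realizable.transfer {H' : LGraph k} {t' : H'.V → ℕ} {F' : Set (Sym2 ℕ)}
    (h : H.Realizable t F) (hE : H'.projEdges t' \ F' = H.projEdges t \ F)
    (f : H.V → H'.V) (ht : ∀ u, t' (f u) = t u) (hl : ∀ u, H'.lab (f u) = H.lab u) :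
    H'.Realizable t' F' := by
  rcases h with h | ⟨ξ, hξ⟩
  · exact Or.inl (hE.trans h)
  · exact Or.inr ⟨ξ, hξ.transfer hE f ht hl⟩

/-- When there is no edge to realize, a single vertex serves as a starting point. -/
theorem Realizable.exists_represents (h : H.Realizable t F) (u₀ : H.V) :
    ∃ ξ : GlueExpr k, ξ.Represents H t F ∧
      ∀ a ∈ ξ.eval.verts, a = t u₀ ∨ ∃ e ∈ ξ.eval.edges, a ∈ e := by
  rcases h with h | ⟨ξ, hξ⟩
  · refine ⟨.intro (t u₀) (H.lab u₀), ⟨trivial, trivial, fun e => ?_, fun a ha => ?_⟩,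
      fun a ha => Or.inl (Finset.mem_singleton.mp ha)⟩
    · rw [h]
      exact iff_of_false (Finset.notMem_empty e) (Set.notMem_empty e)
    · exact ⟨u₀, (Finset.mem_singleton.mp ha).symm, rfl⟩
  · exact ⟨ξ, hξ.toRepresents, fun a ha => Or.inr (hξ.exists_edge a ha)⟩

open GlueExpr

variable {i j : Fin k} {X : Set ℕ}

theorem Realizable.relabel (hij : i ≠ j) (h : H.Realizable t F) :
    (H.relabel i j).Realizable t F := by
  rcases h with h | ⟨ξ, hξ⟩
  · exact Or.inl h
  refine Or.inr ?_
  by_cases hi : ∃ a ∈ ξ.eval.verts, ξ.eval.lab a = i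
  · refine ⟨.relabel i j ξ, ⟨⟨⟨hij, hξ.wf⟩, ⟨hξ.reduced, hi⟩, hξ.mem_edges, fun a ha => ?_⟩,
      hξ.exists_edge⟩⟩
    obtain ⟨u, hu, hlu⟩ := hξ.lab_eq a ha
    exact ⟨u, hu, congrArg (fun c => if c = i then j else c) hlu⟩
  · refine ⟨ξ, ⟨⟨hξ.wf, hξ.reduced, hξ.mem_edges, fun a ha => ?_⟩, hξ.exists_edge⟩⟩
    obtain ⟨u, hu, hlu⟩ := hξ.lab_eq a ha
    refine ⟨u, hu, ?_⟩
    change (if H.lab u = i then j else H.lab u) = _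
    rw [hlu, if_neg fun h => hi ⟨a, ha, h⟩]

theorem Realizable.fuse {t : (H.fuse i).V → ℕ} (h : H.Realizable (t ∘ H.fuseProj i) F) :
    (H.fuse i).Realizable t F :=
  h.transfer (by rw [projEdges_fuse]) _ (fun _ => rfl) lab_fuseProj

section Union

variable {H₁ H₂ : LGraph k} {t : (H₁.union H₂).V → ℕ}

theorem diff_projEdges_union :
    (H₁.union H₂).projEdges t \ F =
      H₁.projEdges (t ∘ Sum.inl) \ (F ∪ H₂.projEdges (t ∘ Sum.inr)) ∪
        H₂.projEdges (t ∘ Sum.inr) \ F := by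
  rw [projEdges_union]
  ext
  simp only [Set.mem_sdiff, Set.mem_union]
  tauto

theorem exists_realizes_union (hC : (H₁.union H₂).ClassCollapse t X) {ξ₁ ξ₂ : GlueExpr k}
    (h₁ : ξ₁.Realizes H₁ (t ∘ Sum.inl) (F ∪ H₂.projEdges (t ∘ Sum.inr)))
    (h₂ : ξ₂.Realizes H₂ (t ∘ Sum.inr) F) : ∃ ξ : GlueExpr k, ξ.Realizes (H₁.union H₂) t F := by
  have hl₁ : ∀ a ∈ ξ₁.eval.verts, ∃ u, t u = a ∧ (H₁.union H₂).lab u = ξ₁.eval.lab a :=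
    fun a ha => let ⟨u, hu, hlu⟩ := h₁.lab_eq a ha; ⟨.inl u, hu, hlu⟩
  have hl₂ : ∀ a ∈ ξ₂.eval.verts, ∃ u, t u = a ∧ (H₁.union H₂).lab u = ξ₂.eval.lab a :=
    fun a ha => let ⟨u, hu, hlu⟩ := h₂.lab_eq a ha; ⟨.inr u, hu, hlu⟩
  have huniq : ξ₁.eval.SharedLabelsUnique ξ₂.eval := hC.sharedLabelsUnique hl₁ hl₂ fun a ha₁ ha₂ =>
    let ⟨u₁, hu₁, _⟩ := h₁.lab_eq a ha₁
    let ⟨u₂, hu₂, _⟩ := h₂.lab_eq a ha₂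
    ⟨.inl u₁, .inr u₂, Sum.inl_ne_inr, hu₁, hu₂⟩
  obtain ⟨ξ₁', hw, hr, hv, he, hlab⟩ := exists_relabel_aligned h₁.wf h₁.reduced huniq
  have hglue := huniq.glueable hv hlab
  have hdisj : ξ₁'.eval.edges ∩ ξ₂.eval.edges = ∅ := by
    refine Finset.eq_empty_of_forall_notMem fun e he' => ?_
    rw [Finset.mem_inter, he, h₁.mem_edges, h₂.mem_edges] at he'
    exact he'.1.2 (Or.inr he'.2.1)
  have hmem : ∀ {a}, a ∈ (glue ξ₁' ξ₂).eval.verts ↔ a ∈ ξ₁.eval.verts ∨ a ∈ ξ₂.eval.verts := by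
    intro a
    change a ∈ ξ₁'.eval.verts ∪ ξ₂.eval.verts ↔ _
    rw [Finset.mem_union, hv]
  have hedges : (glue ξ₁' ξ₂).eval.edges = ξ₁.eval.edges ∪ ξ₂.eval.edges := by
    change ξ₁'.eval.edges ∪ ξ₂.eval.edges = _
    rw [he]
  refine ⟨.glue ξ₁' ξ₂, ⟨⟨⟨hw, h₂.wf, hglue⟩, ⟨hr, h₂.reduced, hdisj, fun v hv' => ?_⟩,
    fun e => ?_, fun a ha => ?_⟩, fun a ha => ?_⟩⟩
  · rw [Finset.mem_inter, hv] at hv'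
    rw [he]
    exact ⟨h₁.exists_edge v hv'.1, h₂.exists_edge v hv'.2⟩
  · rw [hedges, Finset.mem_union, h₁.mem_edges, h₂.mem_edges, diff_projEdges_union]
    rfl
  · change ∃ u, t u = a ∧ _ = if a ∈ ξ₁'.eval.verts then ξ₁'.eval.lab a else ξ₂.eval.lab a
    rw [hv]
    by_cases ha₁ : a ∈ ξ₁.eval.verts
    · rw [if_pos ha₁, hlab a ha₁]
      split_ifs with ha₂
      · exact hl₂ a ha₂
      · exact hl₁ a ha₁
    · rw [if_neg ha₁]
      exact hl₂ a ((hmem.1 ha).resolve_left ha₁)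
  · rw [hedges]
    rcases hmem.1 ha with ha | ha
    · obtain ⟨e, he, hae⟩ := h₁.exists_edge a ha
      exact ⟨e, Finset.mem_union_left _ he, hae⟩
    · obtain ⟨e, he, hae⟩ := h₂.exists_edge a ha
      exact ⟨e, Finset.mem_union_right _ he, hae⟩

theorem Realizable.union (hC : (H₁.union H₂).ClassCollapse t X)
    (h₁ : H₁.Realizable (t ∘ Sum.inl) (F ∪ H₂.projEdges (t ∘ Sum.inr)))
    (h₂ : H₂.Realizable (t ∘ Sum.inr) F) : (H₁.union H₂).Realizable t F := by
  rcases h₁ with h₁ | ⟨ξ₁, h₁⟩ <;> rcases h₂ with h₂ | ⟨ξ₂, h₂⟩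
  · exact Or.inl (by rw [diff_projEdges_union, h₁, h₂, Set.union_empty])
  · exact Or.inr ⟨ξ₂, h₂.transfer (by rw [diff_projEdges_union, h₁, Set.empty_union]) Sum.inr
      (fun _ => rfl) fun _ => rfl⟩
  · exact Or.inr ⟨ξ₁, h₁.transfer (by rw [diff_projEdges_union, h₂, Set.union_empty]) Sum.inl
      (fun _ => rfl) fun _ => rfl⟩
  · exact Or.inr (exists_realizes_union hC h₁ h₂)

end Union

/-- The join creates an edge that no later join re-creates. Its label classes carry disjoint sets
of titles `A` and `B`; the labels `x`, `y` that single out `A` and `B` among the vertices already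
built are joined, after the missing vertices of `A ∪ B` are glued on. -/
theorem exists_realizes_join [Finite H.V] (hij : i ≠ j) (hC : H.ClassCollapse t X)
    (hF : H.LabelClosed t F) (h : H.Realizable t (F ∪ H.joinEdges t i j))
    (hnew : ¬ H.joinEdges t i j ⊆ F) : ∃ ζ : GlueExpr k, ζ.Realizes (H.join i j) t F := by
  obtain ⟨_, ⟨p₀, q₀, hp₀, hq₀, hpq₀, rfl⟩, he₀⟩ := Set.not_subset.mp hnew
  set A := t '' {v | H.lab v = i}
  set B := t '' {v | H.lab v = j}
  have hp₀A : t p₀ ∈ A := ⟨p₀, hp₀, rfl⟩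
  have hq₀B : t q₀ ∈ B := ⟨q₀, hq₀, rfl⟩
  have hAB : Disjoint A B := hC.disjoint_image_lab hij hp₀ hq₀ hpq₀
  have hJ : ∀ {e}, e ∈ H.joinEdges t i j ↔ ∃ a ∈ A, ∃ b ∈ B, s(a, b) = e :=
    hC.mem_joinEdges_iff hij hp₀ hq₀ hpq₀
  have hJF : ∀ e ∈ H.joinEdges t i j, e ∉ F := by
    rintro _ ⟨u, v, hu, hv, -, rfl⟩ hF'
    exact he₀ (hF u v p₀ q₀ (hp₀.trans hu.symm) (hq₀.trans hv.symm) hpq₀ hF')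
  obtain ⟨ξ, hξ, hξv⟩ := h.exists_represents p₀
  obtain ⟨x, hxA, hx⟩ := hC.exists_lab_iff hξ.lab_eq i
  obtain ⟨y, hyB, hy⟩ := hC.exists_lab_iff hξ.lab_eq j
  have hxy : x ≠ y := by
    rintro rfl
    rcases hx with rfl | hA
    · rcases hy with rfl | hB
      · exact hij rfl
      · exact hAB.ne_of_mem ((hxA _ (hB hq₀B)).1 ((hyB _ (hB hq₀B)).2 hq₀B)) hq₀B rfl
    · exact hAB.ne_of_mem hp₀A ((hyB _ (hA hp₀A)).1 ((hxA _ (hA hp₀A)).2 hp₀A)) rfl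
  obtain ⟨ζ, hw, hr, hv, he, hlab, hlabA, hlabB⟩ :=
    exists_join_completion hξ.wf hξ.reduced hxy (Set.toFinite _) hAB hxA hyB hp₀A hq₀B
      fun a ha b hb hab => ((hξ.mem_edges _).1 hab).2 (Or.inr (hJ.2 ⟨a, ha, b, hb, rfl⟩))
  have hjoin : ∀ a ∈ A, ∀ b ∈ B, s(a, b) ∈ ζ.eval.edges := fun a ha b hb =>
    (he _).2 (Or.inr ⟨a, ha, b, hb, rfl⟩)
  refine ⟨ζ, ⟨⟨hw, hr, fun e => ?_, fun a ha => ?_⟩, fun a ha => ?_⟩⟩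
  · rw [he, hξ.mem_edges, ← hJ, projEdges_join]
    simp only [Set.mem_sdiff, Set.mem_union]
    have := hJF e
    tauto
  · by_cases haξ : a ∈ ξ.eval.verts
    · rw [hlab a haξ]
      exact hξ.lab_eq a haξ
    rcases ((hv a).1 ha).resolve_left haξ with ⟨u, hu, rfl⟩ | ⟨u, hu, rfl⟩
    · rw [hlabA _ ⟨u, hu, rfl⟩ haξ, hx.resolve_right fun hA => haξ (hA ⟨u, hu, rfl⟩)]
      exact ⟨u, rfl, hu⟩
    · rw [hlabB _ ⟨u, hu, rfl⟩ haξ, hy.resolve_right fun hB => haξ (hB ⟨u, hu, rfl⟩)]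
      exact ⟨u, rfl, hu⟩
  · rcases (hv a).1 ha with haξ | haA | haB
    · rcases hξv a haξ with rfl | ⟨e, he', hae⟩
      · exact ⟨_, hjoin _ hp₀A _ hq₀B, Sym2.mem_mk_left _ _⟩
      · exact ⟨e, (he e).2 (Or.inl he'), hae⟩
    · exact ⟨_, hjoin _ haA _ hq₀B, Sym2.mem_mk_left _ _⟩
    · exact ⟨_, hjoin _ hp₀A _ haB, Sym2.mem_mk_right _ _⟩

theorem Realizable.join [Finite H.V] (hij : i ≠ j) (hC : H.ClassCollapse t X)
    (hF : H.LabelClosed t F) (h : H.Realizable t (F ∪ H.joinEdges t i j)) :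
    (H.join i j).Realizable t F := by
  by_cases hsub : H.joinEdges t i j ⊆ F
  · refine h.transfer ?_ id (fun _ => rfl) fun _ => rfl
    ext e
    simp only [projEdges_join, Set.mem_sdiff, Set.mem_union]
    have := @hsub e
    tauto
  · exact Or.inr (exists_realizes_join hij hC hF h hsub)

end LGraph

namespace FuseExpr

open LGraph

variable {k : ℕ}

theorem realizable : ∀ φ : FuseExpr k, φ.WF → ∀ (t : φ.eval.V → ℕ) (X : Set ℕ)
    (F : Set (Sym2 ℕ)), φ.eval.ClassCollapse t X → φ.eval.LabelClosed t F →
      φ.eval.Realizable t F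
  | .intro _, _, _, _, _, _, _ =>
    Or.inl (Set.eq_empty_of_forall_notMem fun _ ⟨⟨_, _, h, _⟩, _⟩ => h)
  | .union φ₁ φ₂, ⟨h₁, h₂⟩, _, _, _, hC, hF =>
    .union hC (realizable φ₁ h₁ _ _ _ hC.union_left (hF.union_left hC))
      (realizable φ₂ h₂ _ _ _ hC.union_right hF.union_right)
  | .join _ _ φ, ⟨hij, h⟩, _, _, _, hC, hF =>
    .join hij hC hF (realizable φ h _ _ _ hC (hF.join hC))
  | .relabel _ _ φ, ⟨hij, h⟩, _, _, _, hC, hF =>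
    .relabel hij (realizable φ h _ _ _ hC.of_relabel hF.of_relabel)
  | .fuse _ φ, ⟨h, _⟩, _, _, _, hC, hF => .fuse (realizable φ h _ _ _ hC.of_fuse hF.of_fuse)

end FuseExpr

namespace GlueExpr

variable {k : ℕ} {H : LGraph k} {ξ : GlueExpr k}

/-- Titles coming from an injective map identify nothing, so gluing on the isolated vertices
finishes the construction. -/
theorem Represents.exists_liso [Finite H.V] [Nonempty H.V] {emb : H.V → ℕ}
    (hemb : Injective emb) (hξ : ξ.Represents H emb ∅) :
    ∃ ζ : GlueExpr k, ζ.WF ∧ ζ.Reduced ∧ ζ.eval.LIsoTo H := by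
  classical
  obtain ⟨ζ, hw, hr, hv, he, hlab, hlab'⟩ := exists_extend_verts hξ.wf hξ.reduced
    (Set.finite_range emb).toFinset (H.lab ∘ invFun emb)
  refine ⟨ζ, hw, hr, .of_embedding hemb (fun a => ?_) (fun u v => ?_) fun v => ?_⟩
  · rw [hv, Finset.mem_union, Set.Finite.mem_toFinset, or_iff_right_iff_imp]
    intro ha
    obtain ⟨u, rfl, -⟩ := hξ.lab_eq a ha
    exact ⟨u, rfl⟩
  · rw [he, hξ.mem_edges, Set.sdiff_empty, LGraph.mem_projEdges_of_injective hemb]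
  · by_cases hmem : emb v ∈ ξ.eval.verts
    · obtain ⟨u, hu, hlu⟩ := hξ.lab_eq _ hmem
      rw [hlab _ hmem, ← hlu, hemb hu]
    · rw [hlab' _ ((Set.finite_range emb).mem_toFinset.mpr ⟨v, rfl⟩) hmem, comp_apply,
        leftInverse_invFun hemb v]

end GlueExpr

/-- For every fuse-`k`-expression `φ` there exists a *reduced*
glue-`k`-expression `ξ` whose value is label-preservingly isomorphic to the value
of `φ`. -/
theorem exists_reduced_glue_expression {k : ℕ} (φ : FuseExpr k) (hwf : φ.WF) :
    ∃ ξ : GlueExpr k, ξ.WF ∧ ξ.Reduced ∧ ξ.eval.LIsoTo φ.eval := by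
  obtain ⟨emb, hemb⟩ := Countable.exists_injective_nat φ.eval.V
  have hreal := φ.realizable hwf emb ∅ ∅ (LGraph.classCollapse_of_injective hemb)
    LGraph.labelClosed_empty
  obtain ⟨ξ, hξ, -⟩ := hreal.exists_represents (Classical.arbitrary _)
  exact hξ.exists_liso hemb
end
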